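/- arXiv:1403.7584 — 8 statements merged into one kernel-verified Lean document; each statement's English description precedes it below -/
import Mathlib

section
/- Let H be a graded connected Hopf algebra over a field K of characteristic zero, with grading 𝒜 and finite-dimensional homogeneous components. Then for every m ≥ 1, the restriction of S∘S − id to 𝒜 m is nilpotent of order at most m: for every x ∈ 𝒜 m, (S∘S − id)^m (x) = 0 (the m-fold composite of the linear map S∘S − id_H applied to x vanishes). -/
/-!
Put `T = S² - id` and let `H⁺ = ⨁_{i>0} 𝒜 i`. For homogeneous `x` of positive degree,
`Δx = 1 ⊗ x + x ⊗ 1 + w` with `w ∈ H⁺ ⊗ H⁺`, so the antipode axiom gives `S x + x ∈ H⁺ H⁺`; since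
`T z = S (S z + z) - (S z + z)`, this yields `T (H⁺) ⊆ (H⁺)²`. As `S²` is an algebra endomorphism,
`T (a b) = T a · S² b + a · T b`, hence `T ((H⁺)ᵏ) ⊆ (H⁺)ᵏ⁺¹` for all `k ≥ 1`. Thus for `x ∈ 𝒜 m`,
`Tᵐ x ∈ (H⁺)ᵐ⁺¹` has no component of degree `≤ m`, while `Tᵐ x ∈ 𝒜 m` because `S` preserves degrees.
-/

open Coalgebra HopfAlgebra TensorProduct Finset.HasAntidiagonal

section Filtration

variable {K A : Type*} [CommSemiring K] [Ring A] [Algebra K A]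

theorem AlgHom.map_sub_id_pow_succ_le (φ : A →ₐ[K] A) {P : Submodule K A}
    (hφ : P.map φ.toLinearMap ≤ P) (hT : P.map (φ.toLinearMap - LinearMap.id) ≤ P ^ 2) (k : ℕ) :
    (P ^ (k + 1)).map (φ.toLinearMap - LinearMap.id) ≤ P ^ (k + 2) := by
  induction k with
  | zero => simpa using hT
  | succ k ih =>
    rw [Submodule.map_le_iff_le_comap, pow_succ P (k + 1), Submodule.mul_le]
    intro a ha b hb
    have hTa : φ a - a ∈ P ^ (k + 2) := ih (Submodule.mem_map_of_mem ha)
    have hφb : φ b ∈ P := hφ (Submodule.mem_map_of_mem hb)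
    have hTb : φ b - b ∈ P ^ 2 := hT (Submodule.mem_map_of_mem hb)
    have hmul : φ (a * b) - a * b = (φ a - a) * φ b + a * (φ b - b) := by
      rw [map_mul]; noncomm_ring
    show φ (a * b) - a * b ∈ P ^ (k + 1 + 2)
    rw [hmul]
    refine add_mem ?_ ?_
    · rw [show k + 1 + 2 = k + 2 + 1 by omega, pow_succ]
      exact Submodule.mul_mem_mul hTa hφb
    · rw [pow_add]
      exact Submodule.mul_mem_mul ha hTb

theorem AlgHom.sub_id_pow_apply_mem_pow (φ : A →ₐ[K] A) {P : Submodule K A}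
    (hφ : P.map φ.toLinearMap ≤ P) (hT : P.map (φ.toLinearMap - LinearMap.id) ≤ P ^ 2) (j : ℕ)
    {x : A} (hx : x ∈ P) :
    ((φ.toLinearMap - LinearMap.id : Module.End K A) ^ j) x ∈ P ^ (j + 1) := by
  induction j with
  | zero => simpa using hx
  | succ j ih =>
    rw [pow_succ' _ j, Module.End.mul_apply]
    exact φ.map_sub_id_pow_succ_le hφ hT j (Submodule.mem_map_of_mem ih)

end Filtration

section Grading

variable {K A : Type*} [CommSemiring K] [Semiring A] [Algebra K A]

variable (𝒜 : ℕ → Submodule K A) in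
def degreeAtLeast (k : ℕ) : Submodule K A := ⨆ i, 𝒜 (i + k)

variable {𝒜 : ℕ → Submodule K A}

theorem le_degreeAtLeast {k n : ℕ} (h : k ≤ n) : 𝒜 n ≤ degreeAtLeast 𝒜 k := by
  obtain ⟨i, rfl⟩ := Nat.exists_eq_add_of_le' h
  exact le_iSup (fun i => 𝒜 (i + k)) i

theorem map_degreeAtLeast_le {f : A →ₗ[K] A} (hf : ∀ i, (𝒜 i).map f ≤ 𝒜 i) (k : ℕ) :
    (degreeAtLeast 𝒜 k).map f ≤ degreeAtLeast 𝒜 k := by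
  rw [degreeAtLeast, Submodule.map_iSup]
  exact iSup_mono fun i => hf _

theorem degreeAtLeast_mul_le [SetLike.GradedMul 𝒜] (k l : ℕ) :
    degreeAtLeast 𝒜 k * degreeAtLeast 𝒜 l ≤ degreeAtLeast 𝒜 (k + l) := by
  simp only [degreeAtLeast, Submodule.iSup_mul, Submodule.mul_iSup, iSup_le_iff, Submodule.mul_le]
  intro i j a ha b hb
  exact le_degreeAtLeast (by omega) (SetLike.mul_mem_graded ha hb)

theorem degreeAtLeast_one_pow_le [SetLike.GradedMonoid 𝒜] (k : ℕ) :
    degreeAtLeast 𝒜 1 ^ k ≤ degreeAtLeast 𝒜 k := by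
  induction k with
  | zero =>
    rw [pow_zero, Submodule.one_le]
    exact le_degreeAtLeast le_rfl (SetLike.one_mem_graded 𝒜)
  | succ k ih => rw [pow_succ]; exact (mul_le_mul' ih le_rfl).trans (degreeAtLeast_mul_le k 1)

theorem eq_zero_of_mem_degreeAtLeast [GradedAlgebra 𝒜] {m k : ℕ} (hmk : m < k) {x : A}
    (hx : x ∈ 𝒜 m) (hx' : x ∈ degreeAtLeast 𝒜 k) : x = 0 := by
  classical
  have hker : degreeAtLeast 𝒜 k ≤ LinearMap.ker (GradedAlgebra.proj 𝒜 m) :=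
    iSup_le fun i y hy => by
      have hne : i + k ≠ m := by omega
      simp [GradedAlgebra.proj_apply, DirectSum.decompose_of_mem_ne 𝒜 hy hne]
  rw [← DirectSum.decompose_of_mem_same 𝒜 hx, ← GradedAlgebra.proj_apply]
  exact hker hx'

end Grading

section Hopf

variable {K H : Type*} [CommSemiring K]

namespace HopfAlgebra

theorem antipode_add_self_eq_neg_mul_rTensor [Ring H] [HopfAlgebra K H] {x : H} {w : H ⊗[K] H}
    (hΔ : comul (R := K) x = 1 ⊗ₜ x + x ⊗ₜ 1 + w) (hε : counit (R := K) x = 0) :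
    antipode K x + x = -LinearMap.mul' K H ((antipode K).rTensor H w) := by
  have h := mul_antipode_rTensor_comul_apply (R := K) x
  simp only [hΔ, hε, map_add, LinearMap.rTensor_tmul, LinearMap.mul'_apply, antipode_one, one_mul,
    mul_one, map_zero] at h
  rw [eq_neg_iff_add_eq_zero, add_comm (antipode K x)]
  exact h

theorem antipode_add_self_eq_neg_mul_lTensor [Ring H] [HopfAlgebra K H] {x : H} {w : H ⊗[K] H}
    (hΔ : comul (R := K) x = 1 ⊗ₜ x + x ⊗ₜ 1 + w) (hε : counit (R := K) x = 0) :
    antipode K x + x = -LinearMap.mul' K H ((antipode K).lTensor H w) := by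
  have h := mul_antipode_lTensor_comul_apply (R := K) x
  simp only [hΔ, hε, map_add, LinearMap.lTensor_tmul, LinearMap.mul'_apply, antipode_one, one_mul,
    mul_one, map_zero] at h
  rw [eq_neg_iff_add_eq_zero]
  exact h

variable (K H) in
noncomputable def antipodeSq [Semiring H] [HopfAlgebra K H] : H →ₐ[K] H :=
  .ofLinearMap (antipode K ∘ₗ antipode K) (by simp) fun a b => by
    simp [antipode_mul_antidistrib]

theorem map_antipode_mul_le [Semiring H] [HopfAlgebra K H] (P Q : Submodule K H) :
    (P * Q).map (antipode K) ≤ Q.map (antipode K) * P.map (antipode K) := by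
  rw [Submodule.map_le_iff_le_comap, Submodule.mul_le]
  intro a ha b hb
  rw [Submodule.mem_comap, antipode_mul_antidistrib]
  exact Submodule.mul_mem_mul (Submodule.mem_map_of_mem hb) (Submodule.mem_map_of_mem ha)

end HopfAlgebra

end Hopf

section ConnectedGrading

variable {K H : Type*} [CommRing K] [Ring H] [HopfAlgebra K H]

structure IsConnectedGrading (𝒜 : ℕ → Submodule K H) : Prop where
  comul_mem : ∀ m : ℕ, ∀ x ∈ 𝒜 m, comul (R := K) x ∈
    ∑ pq ∈ antidiagonal m, LinearMap.range (map (𝒜 pq.1).subtype (𝒜 pq.2).subtype)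
  counit_eq_zero : ∀ m : ℕ, 0 < m → ∀ x ∈ 𝒜 m, counit (R := K) x = 0
  zero_eq_span_one : 𝒜 0 = K ∙ 1

variable (𝒜 : ℕ → Submodule K H) in
def positiveTensors (m : ℕ) : Submodule K (H ⊗[K] H) :=
  Submodule.span K
    {t | ∃ p q, 0 < p ∧ 0 < q ∧ p + q = m ∧ ∃ u ∈ 𝒜 p, ∃ v ∈ 𝒜 q, u ⊗ₜ v = t}

variable {𝒜 : ℕ → Submodule K H}

theorem map_positiveTensors_le {M : Type*} [AddCommMonoid M] [Module K M] {m : ℕ}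
    (f : H ⊗[K] H →ₗ[K] M) {N : Submodule K M}
    (hf : ∀ p q, 0 < p → 0 < q → p + q = m → ∀ u ∈ 𝒜 p, ∀ v ∈ 𝒜 q, f (u ⊗ₜ v) ∈ N) :
    (positiveTensors 𝒜 m).map f ≤ N := by
  rw [positiveTensors, Submodule.map_span_le]
  rintro _ ⟨p, q, hp, hq, hpq, u, hu, v, hv, rfl⟩
  exact hf p q hp hq hpq u hu v hv

namespace IsConnectedGrading

theorem exists_smul_one (h : IsConnectedGrading 𝒜) {u : H} (hu : u ∈ 𝒜 0) : ∃ c : K, c • 1 = u :=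
  Submodule.mem_span_singleton.mp (h.zero_eq_span_one ▸ hu)

theorem range_map_le (h : IsConnectedGrading 𝒜) {m : ℕ} {pq : ℕ × ℕ}
    (hpq : pq ∈ antidiagonal m) :
    LinearMap.range (map (𝒜 pq.1).subtype (𝒜 pq.2).subtype) ≤
      (𝒜 m).map (TensorProduct.mk K H H 1) ⊔ (𝒜 m).map ((TensorProduct.mk K H H).flip 1) ⊔
        positiveTensors 𝒜 m := by
  obtain ⟨p, q⟩ := pq
  rw [mem_antidiagonal] at hpq
  rw [range_map_eq_span_tmul, Submodule.span_le]
  rintro _ ⟨⟨u, hu⟩, ⟨v, hv⟩, rfl⟩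
  simp only [Submodule.coe_subtype, SetLike.mem_coe]
  rcases Nat.eq_zero_or_pos p with rfl | hp
  · obtain ⟨c, rfl⟩ := h.exists_smul_one hu
    rw [smul_tmul]
    refine Submodule.mem_sup_left (Submodule.mem_sup_left ⟨c • v, ?_, rfl⟩)
    exact Submodule.smul_mem _ c (by simpa [← hpq] using hv)
  rcases Nat.eq_zero_or_pos q with rfl | hq
  · obtain ⟨c, rfl⟩ := h.exists_smul_one hv
    rw [← smul_tmul]
    refine Submodule.mem_sup_left (Submodule.mem_sup_right ⟨c • u, ?_, rfl⟩)
    exact Submodule.smul_mem _ c (by simpa [← hpq] using hu)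
  exact Submodule.mem_sup_right (Submodule.subset_span ⟨p, q, hp, hq, hpq, u, hu, v, hv, rfl⟩)

theorem exists_comul_eq_add (h : IsConnectedGrading 𝒜) {m : ℕ} (hm : 0 < m) {x : H} (hx : x ∈ 𝒜 m) :
    ∃ w ∈ positiveTensors 𝒜 m, comul (R := K) x = 1 ⊗ₜ x + x ⊗ₜ 1 + w := by
  have hsum := Finset.sum_induction _ (· ≤ _)
    (fun _ _ ha hb => by rw [Submodule.add_eq_sup]; exact sup_le ha hb) bot_le
    (fun _ hpq => h.range_map_le (m := m) hpq)
  obtain ⟨_, hab, w, hw, hcomul⟩ := Submodule.mem_sup.mp (hsum (h.comul_mem m x hx))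
  obtain ⟨_, ⟨a, ha, rfl⟩, _, ⟨b, hb, rfl⟩, rfl⟩ := Submodule.mem_sup.mp hab
  have hwl : LinearMap.rTensor H (counit (R := K)) w = 0 := by
    refine (Submodule.mem_bot K).mp (map_positiveTensors_le _ (fun p _ hp _ _ u hu v _ => ?_)
      (Submodule.mem_map_of_mem hw))
    simp [h.counit_eq_zero p hp u hu]
  have hwr : LinearMap.lTensor H (counit (R := K)) w = 0 := by
    refine (Submodule.mem_bot K).mp (map_positiveTensors_le _ (fun _ q _ hq _ u _ v hv => ?_)
      (Submodule.mem_map_of_mem hw))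
    simp [h.counit_eq_zero q hq v hv]
  have hl := rTensor_counit_comul (R := K) x
  have hr := lTensor_counit_comul (R := K) x
  rw [← hcomul] at hl hr
  simp only [map_add, LinearMap.rTensor_tmul, LinearMap.lTensor_tmul, TensorProduct.mk_apply,
    LinearMap.flip_apply, Bialgebra.counit_one, h.counit_eq_zero m hm a ha,
    h.counit_eq_zero m hm b hb, hwl, hwr, TensorProduct.zero_tmul, TensorProduct.tmul_zero,
    add_zero, zero_add] at hl hr hcomul
  obtain rfl : a = x := by simpa using congrArg (TensorProduct.lid K H) hl
  obtain rfl : b = a := by simpa using congrArg (TensorProduct.rid K H) hr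
  exact ⟨w, hw, hcomul.symm⟩

theorem antipode_mem [SetLike.GradedMul 𝒜] (h : IsConnectedGrading 𝒜) (m : ℕ) :
    ∀ x ∈ 𝒜 m, antipode K x ∈ 𝒜 m := by
  induction m using Nat.strong_induction_on with
  | _ m ih =>
  intro x hx
  rcases Nat.eq_zero_or_pos m with rfl | hm
  · obtain ⟨c, rfl⟩ := h.exists_smul_one hx
    rw [map_smul, antipode_one]
    exact hx
  obtain ⟨w, hw, hcomul⟩ := h.exists_comul_eq_add hm hx
  have hS := antipode_add_self_eq_neg_mul_lTensor hcomul (h.counit_eq_zero m hm x hx)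
  have hw' : LinearMap.mul' K H ((antipode K).lTensor H w) ∈ 𝒜 m := by
    refine map_positiveTensors_le (LinearMap.mul' K H ∘ₗ (antipode K).lTensor H)
      (fun p q _ hq hpq u hu v hv => ?_) (Submodule.mem_map_of_mem hw)
    simpa [← hpq] using SetLike.mul_mem_graded hu (ih q (by omega) v hv)
  rw [eq_sub_of_add_eq hS]
  exact sub_mem (neg_mem hw') hx

theorem antipode_add_self_mem [SetLike.GradedMul 𝒜] (h : IsConnectedGrading 𝒜) {m : ℕ}
    (hm : 0 < m) {x : H} (hx : x ∈ 𝒜 m) :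
    antipode K x + x ∈ degreeAtLeast 𝒜 1 * degreeAtLeast 𝒜 1 := by
  obtain ⟨w, hw, hcomul⟩ := h.exists_comul_eq_add hm hx
  rw [antipode_add_self_eq_neg_mul_rTensor hcomul (h.counit_eq_zero m hm x hx)]
  refine neg_mem (map_positiveTensors_le (LinearMap.mul' K H ∘ₗ (antipode K).rTensor H)
    (fun p q hp hq _ u hu v hv => ?_) (Submodule.mem_map_of_mem hw))
  exact Submodule.mul_mem_mul (le_degreeAtLeast hp (h.antipode_mem p u hu))
    (le_degreeAtLeast hq hv)

theorem map_antipode_degreeAtLeast_le [SetLike.GradedMul 𝒜] (h : IsConnectedGrading 𝒜)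
    (k : ℕ) : (degreeAtLeast 𝒜 k).map (antipode K) ≤ degreeAtLeast 𝒜 k :=
  map_degreeAtLeast_le (fun i => Submodule.map_le_iff_le_comap.mpr (h.antipode_mem i)) k

theorem map_antipodeSq_degreeAtLeast_le [SetLike.GradedMul 𝒜] (h : IsConnectedGrading 𝒜)
    (k : ℕ) : (degreeAtLeast 𝒜 k).map (antipodeSq K H).toLinearMap ≤ degreeAtLeast 𝒜 k := by
  rw [antipodeSq, AlgHom.toLinearMap_ofLinearMap, Submodule.map_comp]
  exact (Submodule.map_mono (h.map_antipode_degreeAtLeast_le k)).trans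
    (h.map_antipode_degreeAtLeast_le k)

theorem map_antipodeSq_sub_id_le [SetLike.GradedMul 𝒜] (h : IsConnectedGrading 𝒜) :
    (degreeAtLeast 𝒜 1).map ((antipodeSq K H).toLinearMap - LinearMap.id) ≤
      degreeAtLeast 𝒜 1 ^ 2 := by
  have hS := h.map_antipode_degreeAtLeast_le 1
  have hSS := (map_antipode_mul_le _ _).trans (mul_le_mul' hS hS)
  refine Submodule.map_le_iff_le_comap.mpr (iSup_le fun i z hz => ?_)
  have hz' := h.antipode_add_self_mem i.succ_pos hz
  have hT : antipodeSq K H z - z = antipode K (antipode K z + z) - (antipode K z + z) := by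
    simp only [antipodeSq, AlgHom.ofLinearMap_apply, LinearMap.comp_apply, map_add]
    abel
  rw [Submodule.mem_comap, LinearMap.sub_apply, AlgHom.toLinearMap_apply, LinearMap.id_apply, hT,
    pow_two]
  exact sub_mem (hSS (Submodule.mem_map_of_mem hz')) hz'

end IsConnectedGrading

end ConnectedGrading

theorem antipode_comp_antipode_sub_id_pow_eq_zero_general
    (K H : Type*) [Field K] [Ring H] [HopfAlgebra K H]
    (𝒜 : ℕ → Submodule K H) [GradedAlgebra 𝒜]
    -- the comultiplication respects the grading
    (hΔ : ∀ m : ℕ, ∀ x ∈ 𝒜 m, Coalgebra.comul (R := K) x ∈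
      ∑ pq ∈ Finset.HasAntidiagonal.antidiagonal m,
        LinearMap.range (TensorProduct.map (𝒜 pq.1).subtype (𝒜 pq.2).subtype))
    -- the counit vanishes in positive degrees
    (hε : ∀ m : ℕ, 0 < m → ∀ x ∈ 𝒜 m, Coalgebra.counit (R := K) x = 0)
    -- graded connectedness: `𝒜 0` is the span of `1`
    (hconn : 𝒜 0 = Submodule.span K {(1 : H)})
    (m : ℕ) (hm : 1 ≤ m) (x : H) (hx : x ∈ 𝒜 m) :
    ((HopfAlgebra.antipode (R := K) ∘ₗ HopfAlgebra.antipode (R := K)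
        - LinearMap.id : Module.End K H) ^ m) x = 0 := by
  have hG : IsConnectedGrading 𝒜 := ⟨hΔ, hε, hconn⟩
  have hdeg : ((antipode K ∘ₗ antipode K - LinearMap.id : Module.End K H) ^ m) x ∈ 𝒜 m :=
    Module.End.pow_apply_mem_of_forall_mem m
      (fun y hy => sub_mem (hG.antipode_mem m _ (hG.antipode_mem m y hy)) hy) x hx
  have hfilt := (antipodeSq K H).sub_id_pow_apply_mem_pow (hG.map_antipodeSq_degreeAtLeast_le 1)
    hG.map_antipodeSq_sub_id_le m (le_degreeAtLeast hm hx)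
  exact eq_zero_of_mem_degreeAtLeast m.lt_succ_self hdeg (degreeAtLeast_one_pow_le _ hfilt)

/-- **Nilpotency of `S² - id`** (Aguiar–Lauve, Proposition on composition powers).
Let `H` be a graded connected Hopf algebra over a field `K` of characteristic zero with
finite-dimensional homogeneous components.  For every `m ≥ 1`, the restriction of
`S ∘ S - id` to the homogeneous component `𝒜 m` is nilpotent of order at most `m`. -/
theorem antipode_comp_antipode_sub_id_pow_eq_zero
    (K H : Type*) [Field K] [CharZero K] [Ring H] [HopfAlgebra K H]
    (𝒜 : ℕ → Submodule K H) [GradedAlgebra 𝒜]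
    -- the comultiplication respects the grading
    (hΔ : ∀ m : ℕ, ∀ x ∈ 𝒜 m, Coalgebra.comul (R := K) x ∈
      ∑ pq ∈ Finset.HasAntidiagonal.antidiagonal m,
        LinearMap.range (TensorProduct.map (𝒜 pq.1).subtype (𝒜 pq.2).subtype))
    -- the counit vanishes in positive degrees
    (hε : ∀ m : ℕ, 0 < m → ∀ x ∈ 𝒜 m, Coalgebra.counit (R := K) x = 0)
    -- graded connectedness: `𝒜 0` is the span of `1`
    (hconn : 𝒜 0 = Submodule.span K {(1 : H)})
    -- finite-dimensional homogeneous components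
    [hfin : ∀ m, Module.Finite K (𝒜 m)]
    (m : ℕ) (hm : 1 ≤ m) (x : H) (hx : x ∈ 𝒜 m) :
    ((HopfAlgebra.antipode (R := K) ∘ₗ HopfAlgebra.antipode (R := K)
        - LinearMap.id : Module.End K H) ^ m) x = 0 :=
  antipode_comp_antipode_sub_id_pow_eq_zero_general K H 𝒜 hΔ hε hconn m hm x hx
end

section
/- Let H be a graded connected Hopf algebra over a field K of characteristic zero, with grading 𝒜 and finite-dimensional homogeneous components. For every natural number n and every m: the characteristic polynomial of the restriction of the even composition power S^(2n) (the 2n-fold composite of the antipode with itself) to 𝒜 m equals (X − 1)^{dim 𝒜 m}, i.e. the characteristic polynomial of the identity of 𝒜 m; and the characteristic polynomial of the restriction of the odd composition power S^(2n+1) to 𝒜 m equals the characteristic polynomial of the restriction of S to 𝒜 m. -/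
/-!
Let `I` be the sum of the homogeneous components of positive degree. For `y` homogeneous of
positive degree, `Δ y = 1 ⊗ y + y ⊗ 1 + (terms in I ⊗ I)`, so the antipode axiom gives
`S y + y ∈ I * I`. Hence `S² - 1` maps `I` into `I²` and, `S²` being multiplicative, `I ^ k` into
`I ^ (k + 1)`; as `I ^ (m + 1)` lives in degrees `> m`, `S² - 1` is nilpotent on `𝒜 m`. Thus
`S ^ (2n) = 1 + N` and `S ^ (2n+1) = S + N S` with `N` nilpotent and commuting with `S`, and adding
a commuting nilpotent does not change the characteristic polynomial.
-/

open Coalgebra HopfAlgebra TensorProduct Polynomial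

namespace LinearMap

section Det

variable {R M : Type*} [CommRing R] [IsDomain R] [AddCommGroup M] [Module R M]
  [Module.Free R M] [Module.Finite R M]

lemma det_one_sub_of_isNilpotent {g : Module.End R M} (hg : IsNilpotent g) :
    (1 - g).det = 1 := by
  simpa [eval_charpoly] using congrArg (eval 1) hg.charpoly_eq_X_pow_finrank

lemma det_sub_of_isNilpotent {f g : Module.End R M} (hf : IsUnit f) (hfg : Commute f g)
    (hg : IsNilpotent g) : (f - g).det = f.det := by
  obtain ⟨u, rfl⟩ := hf
  have hnil : IsNilpotent (↑u⁻¹ * g) := hfg.units_inv_left.isNilpotent_mul_left hg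
  rw [show (u : Module.End R M) - g = u * (1 - ↑u⁻¹ * g) by
      rw [mul_sub, mul_one, ← mul_assoc, Units.mul_inv, one_mul],
    map_mul, det_one_sub_of_isNilpotent hnil, mul_one]

end Det

/-- Over an infinite field both sides agree at every point: where `x - f` is invertible by
`det_sub_of_isNilpotent`, elsewhere because `x - f - g` is not invertible either. -/
lemma charpoly_add_of_isNilpotent {K V : Type*} [Field K] [Infinite K] [AddCommGroup V]
    [Module K V] [Module.Finite K V] {f g : Module.End K V} (hfg : Commute f g)
    (hg : IsNilpotent g) : (f + g).charpoly = f.charpoly := by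
  refine Polynomial.funext fun x => ?_
  set h := algebraMap K (Module.End K V) x - f
  have hhg : Commute h g := (Algebra.commute_algebraMap_left x g).sub_left hfg
  have hunit : IsUnit (h - g) ↔ IsUnit h :=
    ⟨fun hu => by simpa using hg.isUnit_add_left_of_commute hu (hhg.symm.sub_right (.refl g)),
      fun hu => by
        simpa [sub_eq_add_neg] using hg.neg.isUnit_add_left_of_commute hu hhg.symm.neg_left⟩
  have det_eq_zero : ∀ φ : Module.End K V, ¬IsUnit φ → φ.det = 0 := fun φ hφ => by
    rwa [isUnit_iff_isUnit_det, isUnit_iff_ne_zero, not_not] at hφ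
  rw [eval_charpoly, eval_charpoly, ← sub_sub]
  by_cases hu : IsUnit h
  · exact det_sub_of_isNilpotent hu hhg hg
  · rw [det_eq_zero h hu, det_eq_zero _ (hunit.not.mpr hu)]

end LinearMap

lemma IsNilpotent.pow_sub_one {R : Type*} [Ring R] {u : R} (hu : IsNilpotent (u - 1)) (n : ℕ) :
    IsNilpotent (u ^ n - 1) := by
  have hc : Commute (∑ i ∈ Finset.range n, u ^ i) (u - 1) :=
    (geom_sum_mul u n).trans (mul_geom_sum u n).symm
  rw [← geom_sum_mul]
  exact hc.isNilpotent_mul_left hu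

namespace GradedAlgebra

variable {R A : Type*} [CommRing R] [Ring A] [Algebra R A] (𝒜 : ℕ → Submodule R A)

def degreeGE (k : ℕ) : Submodule R A := ⨆ (d : ℕ) (_ : k ≤ d), 𝒜 d

variable {𝒜}

lemma le_degreeGE {k d : ℕ} (hd : k ≤ d) : 𝒜 d ≤ degreeGE 𝒜 k :=
  le_iSup₂_of_le d hd le_rfl

lemma degreeGE_le_comap {f : Module.End R A} (hf : ∀ d, ∀ x ∈ 𝒜 d, f x ∈ 𝒜 d) (k : ℕ) :
    degreeGE 𝒜 k ≤ (degreeGE 𝒜 k).comap f :=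
  iSup₂_le fun d hd x hx => le_degreeGE hd (hf d x hx)

variable [GradedAlgebra 𝒜]

lemma degreeGE_mul_le (p q : ℕ) : degreeGE 𝒜 p * degreeGE 𝒜 q ≤ degreeGE 𝒜 (p + q) := by
  simp only [degreeGE, Submodule.iSup_mul, Submodule.mul_iSup]
  refine iSup₂_le fun e he => iSup₂_le fun d hd => ?_
  exact (Submodule.mul_le.mpr fun x hx y hy => SetLike.mul_mem_graded hx hy).trans
    (le_degreeGE (add_le_add hd he))

lemma degreeGE_one_pow_le (k : ℕ) : degreeGE 𝒜 1 ^ (k + 1) ≤ degreeGE 𝒜 (k + 1) := by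
  induction k with
  | zero => rw [pow_one]
  | succ k ih => rw [pow_succ]; exact (mul_le_mul' ih le_rfl).trans (degreeGE_mul_le _ _)

lemma disjoint_degreeGE_succ (m : ℕ) : Disjoint (𝒜 m) (degreeGE 𝒜 (m + 1)) :=
  (DirectSum.Decomposition.isInternal 𝒜).submodule_iSupIndep.disjoint_biSup
    (y := {d | m + 1 ≤ d}) (by simp)

lemma eq_zero_of_mem_degreeGE_one_pow {m : ℕ} {x : A} (hx : x ∈ 𝒜 m)
    (hx' : x ∈ degreeGE 𝒜 1 ^ (m + 1)) : x = 0 :=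
  Submodule.disjoint_def.mp (disjoint_degreeGE_succ m) x hx (degreeGE_one_pow_le m hx')

end GradedAlgebra

namespace HopfAlgebra

open GradedAlgebra

variable {K H : Type*} [CommRing K] [Ring H] [HopfAlgebra K H] {𝒜 : ℕ → Submodule K H}

structure IsGradedConnected (𝒜 : ℕ → Submodule K H) : Prop where
  comul_mem : ∀ m : ℕ, ∀ x ∈ 𝒜 m, comul (R := K) x ∈
    ∑ pq ∈ Finset.HasAntidiagonal.antidiagonal m,
      LinearMap.range (TensorProduct.map (𝒜 pq.1).subtype (𝒜 pq.2).subtype)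
  counit_eq_zero : ∀ m : ℕ, 0 < m → ∀ x ∈ 𝒜 m, counit (R := K) x = 0
  zero_eq_span_one : 𝒜 0 = Submodule.span K {(1 : H)}

lemma antipode_mul_sub_counit_mem
    (h𝒜 : IsGradedConnected 𝒜) (hS : ∀ m : ℕ, ∀ x ∈ 𝒜 m, antipode K x ∈ 𝒜 m)
    {p q : ℕ} (hpq : 0 < p + q) {u v : H} (hu : u ∈ 𝒜 p) (hv : v ∈ 𝒜 q) :
    antipode K u * v - counit (R := K) v • antipode K u - counit (R := K) u • v ∈
      degreeGE 𝒜 1 * degreeGE 𝒜 1 := by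
  rcases Nat.eq_zero_or_pos p with rfl | hp
  · obtain ⟨c, rfl⟩ := Submodule.mem_span_singleton.mp (h𝒜.zero_eq_span_one ▸ hu)
    simp [h𝒜.counit_eq_zero q (by omega) v hv]
  rcases Nat.eq_zero_or_pos q with rfl | hq
  · obtain ⟨c, rfl⟩ := Submodule.mem_span_singleton.mp (h𝒜.zero_eq_span_one ▸ hv)
    simp [h𝒜.counit_eq_zero p hp u hu]
  simpa [h𝒜.counit_eq_zero p hp u hu, h𝒜.counit_eq_zero q hq v hv] using
    Submodule.mul_mem_mul (le_degreeGE hp (hS p u hu)) (le_degreeGE hq hv)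

lemma antipode_add_self_mem_degreeGE_one_mul
    (h𝒜 : IsGradedConnected 𝒜) (hS : ∀ m : ℕ, ∀ x ∈ 𝒜 m, antipode K x ∈ 𝒜 m)
    {m : ℕ} (hm : 0 < m) {y : H} (hy : y ∈ 𝒜 m) :
    antipode K y + y ∈ degreeGE 𝒜 1 * degreeGE 𝒜 1 := by
  -- `Ψ (u ⊗ v) = S u * v - ε v • S u - ε u • v` kills `1 ⊗ v` and `u ⊗ 1` for `ε u = ε v = 0`
  let Ψ : H ⊗[K] H →ₗ[K] H := LinearMap.mul' K H ∘ₗ (antipode K).rTensor H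
    - antipode K ∘ₗ (TensorProduct.rid K H).toLinearMap ∘ₗ (counit (R := K)).lTensor H
    - (TensorProduct.lid K H).toLinearMap ∘ₗ (counit (R := K)).rTensor H
  have hΨ : Ψ (comul y) = -(antipode K y + y) := by
    simp [Ψ, mul_antipode_rTensor_comul_apply, h𝒜.counit_eq_zero m hm y hy]
    abel
  have hle : ∑ pq ∈ Finset.HasAntidiagonal.antidiagonal m,
      LinearMap.range (TensorProduct.map (𝒜 pq.1).subtype (𝒜 pq.2).subtype) ≤
        (degreeGE 𝒜 1 * degreeGE 𝒜 1).comap Ψ := by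
    refine Finset.sum_induction _ (· ≤ _) (fun _ _ => sup_le) bot_le fun pq hpq => ?_
    rw [← mapIncl, range_mapIncl, Submodule.map₂_le]
    intro u hu v hv
    have hpq : 0 < pq.1 + pq.2 := by rwa [Finset.HasAntidiagonal.mem_antidiagonal.mp hpq]
    simpa [Ψ] using antipode_mul_sub_counit_mem h𝒜 hS hpq hu hv
  simpa only [Submodule.mem_comap, hΨ, neg_mem_iff] using hle (h𝒜.comul_mem m y hy)

local notation "𝒟" => (antipode K * antipode K - 1 : Module.End K H)

lemma antipode_antipode_mul (a b : H) :
    antipode K (antipode K (a * b)) = antipode K (antipode K a) * antipode K (antipode K b) := by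
  rw [antipode_mul_antidistrib, antipode_mul_antidistrib]

lemma degreeGE_one_le_comap_sq
    (h𝒜 : IsGradedConnected 𝒜) (hS : ∀ m : ℕ, ∀ x ∈ 𝒜 m, antipode K x ∈ 𝒜 m) :
    degreeGE 𝒜 1 ≤ (degreeGE 𝒜 1 ^ 2).comap 𝒟 := by
  refine iSup₂_le fun d hd y hy => ?_
  have hy₁ := antipode_add_self_mem_degreeGE_one_mul h𝒜 hS hd hy
  have hy₂ := antipode_add_self_mem_degreeGE_one_mul h𝒜 hS hd (hS d y hy)
  rw [Submodule.mem_comap, LinearMap.sub_apply, Module.End.mul_apply, Module.End.one_apply,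
    show antipode K (antipode K y) - y
      = (antipode K (antipode K y) + antipode K y) - (antipode K y + y) by abel, sq]
  exact sub_mem hy₂ hy₁

lemma degreeGE_one_pow_le_comap
    (h𝒜 : IsGradedConnected 𝒜) (hS : ∀ m : ℕ, ∀ x ∈ 𝒜 m, antipode K x ∈ 𝒜 m) (k : ℕ) :
    degreeGE 𝒜 1 ^ (k + 1) ≤ (degreeGE 𝒜 1 ^ (k + 2)).comap 𝒟 := by
  induction k with
  | zero => simpa using degreeGE_one_le_comap_sq h𝒜 hS
  | succ k ih =>
    rw [pow_succ _ (k + 1)]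
    refine Submodule.mul_le.mpr fun u hu v hv => ?_
    have hSv : antipode K (antipode K v) ∈ degreeGE 𝒜 1 :=
      degreeGE_le_comap hS 1 (degreeGE_le_comap hS 1 hv)
    have hDu : 𝒟 u ∈ degreeGE 𝒜 1 ^ (k + 2) := ih hu
    have hDv : 𝒟 v ∈ degreeGE 𝒜 1 ^ 2 := degreeGE_one_le_comap_sq h𝒜 hS hv
    rw [Submodule.mem_comap, LinearMap.sub_apply, Module.End.mul_apply, Module.End.one_apply,
      antipode_antipode_mul, show antipode K (antipode K u) * antipode K (antipode K v) - u * v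
        = 𝒟 u * antipode K (antipode K v) + u * 𝒟 v by simp [sub_mul, mul_sub]]
    refine add_mem ?_ ?_
    · rw [show k + 1 + 2 = k + 2 + 1 from rfl, pow_succ]
      exact Submodule.mul_mem_mul hDu hSv
    · rw [pow_add]
      exact Submodule.mul_mem_mul hu hDv

lemma pow_succ_apply_mem_degreeGE_one_pow
    (h𝒜 : IsGradedConnected 𝒜) (hS : ∀ m : ℕ, ∀ x ∈ 𝒜 m, antipode K x ∈ 𝒜 m) {m : ℕ} {x : H} (hx : x ∈ 𝒜 m) (j : ℕ) :
    (𝒟 ^ (j + 1)) x ∈ degreeGE 𝒜 1 ^ (j + 1) := by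
  induction j with
  | zero =>
    rw [zero_add, pow_one, pow_one]
    rcases Nat.eq_zero_or_pos m with rfl | hm
    · obtain ⟨c, rfl⟩ := Submodule.mem_span_singleton.mp (h𝒜.zero_eq_span_one ▸ hx)
      simp [antipode_one]
    · exact sub_mem (le_degreeGE hm (hS m _ (hS m x hx))) (le_degreeGE hm hx)
  | succ j ih =>
    rw [pow_succ' 𝒟, Module.End.mul_apply]
    exact degreeGE_one_pow_le_comap h𝒜 hS j ih

lemma isNilpotent_restrict_antipode_sq_sub_one [GradedAlgebra 𝒜]
    (h𝒜 : IsGradedConnected 𝒜) (hS : ∀ m : ℕ, ∀ x ∈ 𝒜 m, antipode K x ∈ 𝒜 m) (m : ℕ) :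
    IsNilpotent (((antipode K).restrict (hS m) : Module.End K (𝒜 m)) ^ 2 - 1) := by
  have hD : ∀ x ∈ 𝒜 m, 𝒟 x ∈ 𝒜 m := fun x hx => sub_mem (hS m _ (hS m x hx)) hx
  have hrestrict :
      ((antipode K).restrict (hS m) : Module.End K (𝒜 m)) ^ 2 - 1 = LinearMap.restrict 𝒟 hD := by
    ext
    simp [sq]
  refine ⟨m + 1, LinearMap.ext fun x => Subtype.ext ?_⟩
  rw [hrestrict, Module.End.pow_restrict, LinearMap.coe_restrict_apply, LinearMap.zero_apply,
    Submodule.coe_zero]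
  exact eq_zero_of_mem_degreeGE_one_pow (Module.End.pow_apply_mem_of_forall_mem _ hD x x.2)
    (pow_succ_apply_mem_degreeGE_one_pow h𝒜 hS x.2 m)

end HopfAlgebra

/-- **Characteristic polynomials of composition powers of the antipode** (Aguiar–Lauve).
Let `H` be a graded connected Hopf algebra over a field `K` of characteristic zero with
finite-dimensional homogeneous components.  For all `n m : ℕ`, the characteristic polynomial
of `S^(2n)` restricted to `𝒜 m` is `(X - 1)^{dim 𝒜 m}` (the characteristic polynomial of the
identity), and that of `S^(2n+1)` restricted to `𝒜 m` equals the characteristic polynomial of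
`S` restricted to `𝒜 m`. -/
theorem charpoly_antipode_comp_pow
    (K H : Type*) [Field K] [CharZero K] [Ring H] [HopfAlgebra K H]
    (𝒜 : ℕ → Submodule K H) [GradedAlgebra 𝒜]
    -- the comultiplication respects the grading
    (hΔ : ∀ m : ℕ, ∀ x ∈ 𝒜 m, Coalgebra.comul (R := K) x ∈
      ∑ pq ∈ Finset.HasAntidiagonal.antidiagonal m,
        LinearMap.range (TensorProduct.map (𝒜 pq.1).subtype (𝒜 pq.2).subtype))
    -- the counit vanishes in positive degrees
    (hε : ∀ m : ℕ, 0 < m → ∀ x ∈ 𝒜 m, Coalgebra.counit (R := K) x = 0)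
    -- graded connectedness: `𝒜 0` is the span of `1`
    (hconn : 𝒜 0 = Submodule.span K {(1 : H)})
    -- finite-dimensional homogeneous components
    [hfin : ∀ m, Module.Finite K (𝒜 m)]
    -- the antipode and its composition powers preserve the grading
    (hS : ∀ m : ℕ, ∀ x ∈ 𝒜 m, HopfAlgebra.antipode (R := K) x ∈ 𝒜 m)
    (hSpow : ∀ (k m : ℕ), ∀ x ∈ 𝒜 m,
      ((HopfAlgebra.antipode (R := K) : Module.End K H) ^ k) x ∈ 𝒜 m)
    (n m : ℕ) :
    LinearMap.charpoly
        ((((HopfAlgebra.antipode (R := K) : Module.End K H) ^ (2 * n)).restrict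
          (hSpow (2 * n) m)) : Module.End K (𝒜 m)) =
      (Polynomial.X - 1) ^ Module.finrank K (𝒜 m) ∧
    LinearMap.charpoly
        ((((HopfAlgebra.antipode (R := K) : Module.End K H) ^ (2 * n + 1)).restrict
          (hSpow (2 * n + 1) m)) : Module.End K (𝒜 m)) =
      LinearMap.charpoly ((HopfAlgebra.antipode (R := K)).restrict (hS m)) := by
  set A : Module.End K (𝒜 m) := (antipode K).restrict (hS m)
  have hpow : ∀ k, ((antipode K : Module.End K H) ^ k).restrict (hSpow k m) = A ^ k :=
    fun k => (Module.End.pow_restrict k (hS m) _).symm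
  have hN : IsNilpotent (A ^ (2 * n) - 1) := by
    rw [pow_mul]
    exact IsNilpotent.pow_sub_one (R := Module.End K (𝒜 m))
      (isNilpotent_restrict_antipode_sq_sub_one ⟨hΔ, hε, hconn⟩ hS m) n
  have hNA : Commute (A ^ (2 * n) - 1) A :=
    Commute.sub_left (R := Module.End K (𝒜 m)) ((Commute.refl A).pow_left _) (.one_left A)
  rw [hpow, hpow]
  constructor
  · rw [← LinearMap.charpoly_one, ← LinearMap.charpoly_add_of_isNilpotent (.one_left _) hN,
      add_sub_cancel (1 : Module.End K (𝒜 m))]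
  · rw [show A ^ (2 * n + 1) = A + (A ^ (2 * n) - 1) * A by
      ext x
      simp [pow_succ]]
    exact LinearMap.charpoly_add_of_isNilpotent (hNA.symm.mul_right (.refl A))
      (hNA.isNilpotent_mul_right hN)
end

section
/- For every natural number m, the number of self-conjugate partitions of m equals the number of partitions of m with an even number of even parts minus the number of partitions of m with an odd number of even parts; that is, c(m) + o(m) = e(m), where c(m) is the number of self-conjugate partitions of m, e(m) is the number of partitions of m having an even number of even parts, and o(m) is the number of partitions of m having an odd number of even parts. -/
/-- The multiset of parts of the conjugate partition of a partition with parts `s`: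
its `j`-th part is the number of parts of `s` that are `≥ j` (transpose of the Young
diagram); we record one entry for each `j ≥ 1` for which this count is positive. -/
def conjParts (s : Multiset ℕ) : Multiset ℕ :=
  ((Finset.Icc 1 s.sum).val.map fun j => (s.filter fun a => j ≤ a).card).filter fun c => 0 < c

/-- A partition is self-conjugate if it coincides with its conjugate. -/
def Nat.Partition.SelfConjugate {m : ℕ} (p : Nat.Partition m) : Prop :=
  conjParts p.parts = p.parts

/-!
Both sides are compared with the number of partitions of `m` into distinct odd parts.

A self-conjugate Young diagram is the union of its nested diagonal hooks: the `t`-th one has arm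
and leg of the same length `aₜ`, hence `2 aₜ + 1` cells, and `a₀ > a₁ > ⋯`. Conversely every
finite set of arm lengths arises this way, so the hook lengths give a bijection between
self-conjugate partitions and partitions into distinct odd parts.

The signed count `e(m) - o(m) = ∑ (-1)^(number of even parts)` has generating function
`F = ∏_{k odd} 1/(1 - Xᵏ) · ∏_{k even} 1/(1 + Xᵏ)`. With `E = ∏_{k even} (1 + Xᵏ)`,
Euler's theorem gives `F · E = ∏_{k odd} 1/(1 - Xᵏ) = ∏_k (1 + Xᵏ) = ∏_{k odd} (1 + Xᵏ) · E`,
and cancelling `E` leaves the generating function of partitions into distinct odd parts.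
-/

open Finset PowerSeries PowerSeries.WithPiTopology

namespace YoungDiagram

section RowLens

variable (μ : YoungDiagram)

theorem lt_colLen_iff_lt_rowLen {i j : ℕ} : i < μ.colLen j ↔ j < μ.rowLen i :=
  mem_iff_lt_colLen.symm.trans mem_iff_lt_rowLen

theorem coe_rowLens : (μ.rowLens : Multiset ℕ) = (range (μ.colLen 0)).val.map μ.rowLen := rfl

theorem card_cells_eq_sum_rowLens : #μ.cells = μ.rowLens.sum := by
  rw [← Multiset.sum_coe, coe_rowLens, ← sum_eq_multiset_sum,
    card_eq_sum_card_fiberwise (f := Prod.fst) fun c hc => ?_]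
  · exact sum_congr rfl fun i _ => (rowLen_eq_card μ).symm
  · rw [mem_coe, mem_cells] at hc
    exact mem_range.2 ((mem_iff_lt_colLen.1 hc).trans_le (μ.colLen_anti 0 c.2 c.2.zero_le))

theorem rowLen_zero_le_card_cells : μ.rowLen 0 ≤ #μ.cells := by
  rw [rowLen_eq_card]
  exact card_filter_le _ _

theorem card_filter_lt_rowLens (j : ℕ) :
    Multiset.card ((μ.rowLens : Multiset ℕ).filter (j < ·)) = μ.colLen j := by
  rw [coe_rowLens, Multiset.filter_map, Multiset.card_map, ← filter_val, ← card_def]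
  simp only [Function.comp_def, ← lt_colLen_iff_lt_rowLen]
  rw [← Nat.Iio_eq_range, Iio_filter_lt, min_eq_right (μ.colLen_anti 0 j j.zero_le), Nat.card_Iio]

theorem conjParts_rowLens : conjParts μ.rowLens = μ.transpose.rowLens := by
  have hIcc : (Icc 1 (μ.rowLens : Multiset ℕ).sum).val = (range #μ.cells).val.map (· + 1) := by
    rw [Multiset.sum_coe, ← card_cells_eq_sum_rowLens, ← Ico_add_one_right_eq_Icc, range_eq_Ico]
    exact (Multiset.map_add_right_Ico 0 _ 1).symm
  have hcol (j : ℕ) : Multiset.card ((μ.rowLens : Multiset ℕ).filter (j + 1 ≤ ·)) = μ.colLen j :=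
    μ.card_filter_lt_rowLens j
  rw [conjParts, hIcc, Multiset.map_map, coe_rowLens μ.transpose, colLen_transpose]
  simp only [Function.comp_def, hcol, rowLen_transpose, Multiset.filter_map]
  rw [← filter_val]
  congr 2
  ext i
  simp only [mem_filter, mem_range, lt_colLen_iff_lt_rowLen]
  have := μ.rowLen_zero_le_card_cells
  omega

end RowLens

theorem ext_of_coe_rowLens {μ ν : YoungDiagram}
    (h : (μ.rowLens : Multiset ℕ) = ν.rowLens) : μ = ν :=
  equivListRowLens.injective <| Subtype.ext <|
    (Multiset.coe_eq_coe.1 h).eq_of_sortedGE μ.rowLens_sorted ν.rowLens_sorted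

end YoungDiagram

namespace Nat.Partition

open YoungDiagram

variable {m : ℕ}

def toYoungDiagram (p : m.Partition) : YoungDiagram :=
  ofRowLens (p.parts.sort (· ≥ ·)) (Multiset.pairwise_sort _ _).sortedGE

theorem coe_rowLens_toYoungDiagram (p : m.Partition) :
    (p.toYoungDiagram.rowLens : Multiset ℕ) = p.parts := by
  rw [toYoungDiagram, rowLens_ofRowLens_eq_self, Multiset.sort_eq]
  exact fun x hx => p.parts_pos ((Multiset.mem_sort _).1 hx)

def equivYoungDiagram : m.Partition ≃ {μ : YoungDiagram // #μ.cells = m} where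
  toFun p := ⟨p.toYoungDiagram, by
    rw [card_cells_eq_sum_rowLens, ← Multiset.sum_coe, coe_rowLens_toYoungDiagram, p.parts_sum]⟩
  invFun μ := ⟨μ.1.rowLens, fun h => μ.1.pos_of_mem_rowLens _ h, by
    rw [Multiset.sum_coe, ← card_cells_eq_sum_rowLens, μ.2]⟩
  left_inv p := Nat.Partition.ext (coe_rowLens_toYoungDiagram p)
  right_inv μ := Subtype.ext (ext_of_coe_rowLens (coe_rowLens_toYoungDiagram _))

theorem selfConjugate_iff_transpose_eq (p : m.Partition) :
    p.SelfConjugate ↔ p.toYoungDiagram.transpose = p.toYoungDiagram := by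
  rw [SelfConjugate, ← coe_rowLens_toYoungDiagram, conjParts_rowLens]
  exact ⟨ext_of_coe_rowLens, fun h => by rw [h]⟩

end Nat.Partition

namespace YoungDiagram

def hook (r a : ℕ) : Finset (ℕ × ℕ) := {r} ×ˢ Icc r (r + a) ∪ Ioc r (r + a) ×ˢ {r}

theorem mem_hook {r a i j : ℕ} : (i, j) ∈ hook r a ↔ min i j = r ∧ max i j ≤ r + a := by
  simp only [hook, mem_union, mem_product, mem_singleton, mem_Icc, mem_Ioc]
  omega

theorem card_hook (r a : ℕ) : #(hook r a) = 2 * a + 1 := by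
  rw [hook, card_union_of_disjoint, card_product, card_product, card_singleton, Nat.card_Icc,
    Nat.card_Ioc]
  · omega
  · simp only [disjoint_left, mem_product, mem_singleton, mem_Icc, mem_Ioc]
    omega

variable {μ : YoungDiagram}

theorem exists_diag_notMem (μ : YoungDiagram) : ∃ n, (n, n) ∉ μ :=
  ⟨μ.rowLen 0, fun h => (mem_iff_lt_rowLen.1 h).not_ge (μ.rowLen_anti 0 _ (Nat.zero_le _))⟩

noncomputable def durfee (μ : YoungDiagram) : ℕ := Nat.find μ.exists_diag_notMem

theorem lt_durfee_iff {t : ℕ} : t < μ.durfee ↔ (t, t) ∈ μ := by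
  refine ⟨fun h => not_not.1 (Nat.find_min _ h), fun h => ?_⟩
  by_contra! hle
  exact Nat.find_spec μ.exists_diag_notMem (μ.up_left_mem hle hle h)

theorem lt_rowLen_of_lt_durfee {t : ℕ} (ht : t < μ.durfee) : t < μ.rowLen t :=
  mem_iff_lt_rowLen.1 (lt_durfee_iff.1 ht)

-- Meaningful only for `t < μ.durfee`; beyond it the subtraction truncates.
def arm (μ : YoungDiagram) (t : ℕ) : ℕ := μ.rowLen t - (t + 1)

theorem arm_strictAntiOn : StrictAntiOn μ.arm (Set.Iio μ.durfee) := by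
  intro t _ u hu htu
  have := μ.rowLen_anti t u htu.le
  have := lt_rowLen_of_lt_durfee hu
  simp only [arm]
  omega

noncomputable def armSet (μ : YoungDiagram) : Finset ℕ := (range μ.durfee).image μ.arm

section Symmetric

variable (hμ : μ.transpose = μ)
include hμ

theorem colLen_eq_rowLen_of_transpose_eq (t : ℕ) : μ.colLen t = μ.rowLen t := by
  rw [← rowLen_transpose, hμ]

theorem mem_iff_of_transpose_eq {i j : ℕ} :
    (i, j) ∈ μ ↔ min i j < μ.durfee ∧ max i j < μ.rowLen (min i j) := by
  rcases le_total i j with hij | hij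
  · rw [min_eq_left hij, max_eq_right hij, lt_durfee_iff, ← mem_iff_lt_rowLen]
    exact ⟨fun h => ⟨μ.up_left_mem le_rfl hij h, h⟩, And.right⟩
  · rw [min_eq_right hij, max_eq_left hij, lt_durfee_iff, ← colLen_eq_rowLen_of_transpose_eq hμ,
      ← mem_iff_lt_colLen]
    exact ⟨fun h => ⟨μ.up_left_mem hij le_rfl h, h⟩, And.right⟩

theorem card_cells_of_transpose_eq :
    #μ.cells = ∑ t ∈ range μ.durfee, (2 * μ.arm t + 1) := by
  rw [card_eq_sum_card_fiberwise (f := fun c => min c.1 c.2) fun c hc =>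
    mem_range.2 ((mem_iff_of_transpose_eq hμ).1 ((mem_cells _).1 hc)).1]
  refine sum_congr rfl fun t ht => ?_
  have htr := lt_rowLen_of_lt_durfee (mem_range.1 ht)
  rw [← card_hook t]
  congr 1
  ext ⟨i, j⟩
  simp only [mem_filter, mem_cells, mem_iff_of_transpose_eq hμ, mem_hook, arm]
  constructor
  · rintro ⟨⟨-, h⟩, rfl⟩
    omega
  · rintro ⟨rfl, h⟩
    exact ⟨⟨mem_range.1 ht, by omega⟩, rfl⟩

theorem sum_armSet :
    ∑ s ∈ μ.armSet, (2 * s + 1) = #μ.cells := by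
  rw [armSet, sum_image (by simpa using arm_strictAntiOn.injOn), card_cells_of_transpose_eq hμ]

end Symmetric

end YoungDiagram

namespace Finset

def descRank (S : Finset ℕ) (s : ℕ) : ℕ := #{x ∈ S | s < x}

variable {S : Finset ℕ} {s s' : ℕ}

theorem descRank_lt_card (hs : s ∈ S) : S.descRank s < #S :=
  card_lt_card (filter_ssubset.2 ⟨s, hs, lt_irrefl s⟩)

theorem descRank_strictAntiOn : StrictAntiOn S.descRank S := by
  intro s _ s' hs' hss'
  refine card_lt_card ((ssubset_iff_of_subset ?_).2 ⟨s', mem_filter.2 ⟨hs', hss'⟩, by simp⟩)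
  exact fun x hx => mem_filter.2 ⟨(mem_filter.1 hx).1, hss'.trans (mem_filter.1 hx).2⟩

theorem image_descRank : S.image S.descRank = range #S := by
  refine eq_of_subset_of_card_le (fun t ht => ?_) ?_
  · obtain ⟨s, hs, rfl⟩ := mem_image.1 ht
    exact mem_range.2 (descRank_lt_card hs)
  · rw [card_range, card_image_of_injOn descRank_strictAntiOn.injOn]

theorem exists_descRank_eq {t : ℕ} (ht : t < #S) : ∃ s ∈ S, S.descRank s = t :=
  mem_image.1 (image_descRank ▸ mem_range.2 ht)

theorem descRank_add_le (h : s ≤ s') : S.descRank s + s ≤ S.descRank s' + s' := by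
  have hsub : {x ∈ S | s < x} ⊆ {x ∈ S | s' < x} ∪ Ioc s s' := by
    intro x hx
    simp only [mem_filter, mem_union, mem_Ioc] at hx ⊢
    rcases lt_or_ge s' x with h' | h'
    exacts [Or.inl ⟨hx.1, h'⟩, Or.inr ⟨hx.2, h'⟩]
  have := (card_le_card hsub).trans (card_union_le _ _)
  rw [Nat.card_Ioc] at this
  unfold descRank
  omega

end Finset

namespace YoungDiagram

/-- The hook with arm `s` has its corner at the `S.descRank s`-th diagonal cell, so the hooks are
nested with the longest arm outermost. -/
def ofArms (S : Finset ℕ) : YoungDiagram where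
  cells := S.biUnion fun s => hook (S.descRank s) s
  isLowerSet := by
    rintro ⟨i, j⟩ ⟨i', j'⟩ ⟨hi, hj⟩ hc
    simp only [coe_biUnion, Set.mem_iUnion, mem_coe, mem_hook, exists_prop] at hc hi hj ⊢
    obtain ⟨s, hs, hmin, hmax⟩ := hc
    obtain ⟨s', hs', hrank⟩ := exists_descRank_eq (S := S) (t := min i' j')
      (by have := descRank_lt_card hs; omega)
    have hss' : s ≤ s' := (descRank_strictAntiOn.le_iff_ge hs' hs).1 (by omega)
    have := descRank_add_le (S := S) hss'
    exact ⟨s', hs', hrank.symm, by omega⟩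

variable {S : Finset ℕ}

theorem mem_ofArms {i j : ℕ} :
    (i, j) ∈ ofArms S ↔ ∃ s ∈ S, min i j = S.descRank s ∧ max i j ≤ S.descRank s + s := by
  simp [← mem_cells, ofArms, mem_hook]

theorem transpose_ofArms : (ofArms S).transpose = ofArms S := by
  ext ⟨i, j⟩
  simp only [mem_cells, mem_transpose, Prod.swap_prod_mk, mem_ofArms, min_comm j, max_comm j]

theorem durfee_ofArms : (ofArms S).durfee = #S := by
  refine eq_of_forall_lt_iff fun t => ?_
  rw [lt_durfee_iff, mem_ofArms]
  simp only [min_self, max_self]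
  refine ⟨fun ⟨s, hs, hrank, _⟩ => hrank ▸ descRank_lt_card hs, fun ht => ?_⟩
  obtain ⟨s, hs, rfl⟩ := exists_descRank_eq ht
  exact ⟨s, hs, rfl, Nat.le_add_right _ _⟩

theorem rowLen_ofArms {s : ℕ} (hs : s ∈ S) :
    (ofArms S).rowLen (S.descRank s) = S.descRank s + s + 1 := by
  refine le_antisymm (not_lt.1 fun h => ?_)
    (mem_iff_lt_rowLen.1 (mem_ofArms.2 ⟨s, hs, by simp, by simp⟩))
  obtain ⟨s', hs', hmin, hmax⟩ := mem_ofArms.1 (mem_iff_lt_rowLen.2 h)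
  rw [min_eq_left (by omega)] at hmin
  rw [max_eq_right (by omega)] at hmax
  have := descRank_strictAntiOn.injOn hs hs' hmin
  omega

theorem armSet_ofArms : (ofArms S).armSet = S := by
  rw [armSet, durfee_ofArms, ← image_descRank, image_image]
  convert image_id (s := S) using 1
  refine image_congr fun s hs => ?_
  simp only [Function.comp_apply, arm, rowLen_ofArms hs, id]
  omega

theorem card_cells_ofArms : #(ofArms S).cells = ∑ s ∈ S, (2 * s + 1) := by
  rw [← sum_armSet transpose_ofArms, armSet_ofArms]

theorem descRank_armSet {μ : YoungDiagram} {t : ℕ} (ht : t < μ.durfee) :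
    μ.armSet.descRank (μ.arm t) = t := by
  have hinj : Set.InjOn μ.arm (range μ.durfee) := by simpa using arm_strictAntiOn.injOn
  rw [descRank, armSet, filter_image, card_image_of_injOn (hinj.mono (filter_subset _ _))]
  convert card_range t
  ext u
  simp only [mem_filter, mem_range]
  constructor
  · rintro ⟨hu, hlt⟩
    exact (arm_strictAntiOn.lt_iff_gt ht hu).1 hlt
  · intro hut
    exact ⟨hut.trans ht, arm_strictAntiOn (hut.trans ht) ht hut⟩

theorem ofArms_armSet {μ : YoungDiagram} (hμ : μ.transpose = μ) : ofArms μ.armSet = μ := by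
  ext ⟨i, j⟩
  simp only [mem_cells, mem_ofArms, mem_iff_of_transpose_eq hμ]
  constructor
  · rintro ⟨s, hs, hmin, hmax⟩
    obtain ⟨t, ht, rfl⟩ := mem_image.1 hs
    have ht := mem_range.1 ht
    rw [descRank_armSet ht] at hmin hmax
    have := lt_rowLen_of_lt_durfee ht
    rw [arm] at hmax
    rw [hmin]
    exact ⟨ht, by omega⟩
  · rintro ⟨ht, hmax⟩
    refine ⟨_, mem_image_of_mem _ (mem_range.2 ht), (descRank_armSet ht).symm, ?_⟩
    rw [descRank_armSet ht, arm]
    omega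

noncomputable def symmetricEquivArms {m : ℕ} :
    {μ : YoungDiagram // #μ.cells = m ∧ μ.transpose = μ} ≃
      {S : Finset ℕ // ∑ s ∈ S, (2 * s + 1) = m} where
  toFun μ := ⟨μ.1.armSet, (sum_armSet μ.2.2).trans μ.2.1⟩
  invFun S := ⟨ofArms S.1, card_cells_ofArms.trans S.2, transpose_ofArms⟩
  left_inv μ := Subtype.ext (ofArms_armSet μ.2.2)
  right_inv _ := Subtype.ext armSet_ofArms

end YoungDiagram

theorem Multiset.map_two_mul_add_one_map_div_two {s : Multiset ℕ} (hs : ∀ i ∈ s, ¬Even i) :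
    (s.map (· / 2)).map (fun s => 2 * s + 1) = s := by
  rw [Multiset.map_map]
  conv_rhs => rw [← Multiset.map_id s]
  exact Multiset.map_congr rfl fun a ha =>
    Nat.two_mul_div_two_add_one_of_odd (Nat.not_even_iff_odd.1 (hs a ha))

namespace Nat.Partition

variable {m : ℕ}

def finsetEquivOddDistinct :
    {S : Finset ℕ // ∑ s ∈ S, (2 * s + 1) = m} ≃
      {p : m.Partition // p.parts.Nodup ∧ ∀ i ∈ p.parts, ¬Even i} where
  toFun S := ⟨⟨S.1.val.map fun s => 2 * s + 1, by simp, S.2⟩,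
    S.1.nodup.map fun a b h => by omega, by simp [Nat.not_even_iff_odd]⟩
  invFun p := ⟨⟨p.1.parts.map (· / 2), Multiset.Nodup.of_map (fun s => 2 * s + 1) <| by
      rw [Multiset.map_two_mul_add_one_map_div_two p.2.2]; exact p.2.1⟩, by
    rw [sum_eq_multiset_sum, Multiset.map_two_mul_add_one_map_div_two p.2.2, p.1.parts_sum]⟩
  left_inv S := by
    refine Subtype.ext (Finset.val_injective ?_)
    simp only [Multiset.map_map]
    conv_rhs => rw [← Multiset.map_id S.1.val]
    exact Multiset.map_congr rfl fun a _ => by simp; omega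
  right_inv p := Subtype.ext (Nat.Partition.ext (Multiset.map_two_mul_add_one_map_div_two p.2.2))

noncomputable def selfConjugateEquivOddDistinct :
    {p : m.Partition // p.SelfConjugate} ≃
      {p : m.Partition // p.parts.Nodup ∧ ∀ i ∈ p.parts, ¬Even i} :=
  (equivYoungDiagram.subtypeEquiv selfConjugate_iff_transpose_eq).trans
    ((Equiv.subtypeSubtypeEquivSubtypeInter _ _).trans
      (YoungDiagram.symmetricEquivArms.trans finsetEquivOddDistinct))

end Nat.Partition

theorem Multiset.prod_map_ite_neg_one {α R : Type*} [CommMonoid R] [HasDistribNeg R]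
    (P : α → Prop) [DecidablePred P] (s : Multiset α) :
    (s.map fun a => if P a then (-1 : R) else 1).prod = (-1) ^ card (s.filter P) := by
  induction s using Multiset.induction with
  | empty => simp
  | cons a s ih => by_cases h : P a <;> simp [h, ih, pow_succ']

namespace Nat.Partition

section Coeff

variable {R : Type*} [CommSemiring R]

theorem constantCoeff_genFun (f : ℕ → ℕ → R) : constantCoeff (genFun f) = 1 := by
  simp [← coeff_zero_eq_constantCoeff_apply]

theorem coeff_genFun_ite_count_eq_one (P : ℕ → Prop) [DecidablePred P] (n : ℕ) :
    coeff n (genFun fun i c => if P i ∧ c = 1 then (1 : R) else 0) =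
      #{p : n.Partition | p.parts.Nodup ∧ ∀ i ∈ p.parts, P i} := by
  simp_rw [coeff_genFun, Finsupp.prod, prod_boole, Multiset.toFinsupp_apply,
    Multiset.toFinsupp_support, ← Finset.sum_boole]
  refine sum_congr rfl fun p _ => ?_
  simp only [Multiset.mem_toFinset, Multiset.nodup_iff_count_eq_one]
  grind [Multiset.count_eq_zero]

theorem coeff_genFun_ite_not_even (n : ℕ) :
    coeff n (genFun fun i _ => if ¬Even i then (1 : R) else 0) = #(odds n) := by
  simp_rw [coeff_genFun, odds, restricted, card_filter, Finsupp.prod, prod_boole]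
  simp

end Coeff

theorem coeff_genFun_neg_one_pow_even {R : Type*} [CommRing R] (n : ℕ) :
    coeff n (genFun fun i c => if Even i then (-1 : R) ^ c else 1) =
      ∑ p : n.Partition, (-1) ^ Multiset.card (p.parts.filter Even) := by
  refine (coeff_genFun _ _).trans (sum_congr rfl fun p _ => ?_)
  rw [← Multiset.prod_map_ite_neg_one, prod_multiset_map_count, Finsupp.prod,
    Multiset.toFinsupp_support]
  simp [ite_pow]

section Topology

variable {R : Type*} [CommSemiring R] [TopologicalSpace R]

theorem genFun_mul_genFun [T2Space R] [IsTopologicalSemiring R] {f g h : ℕ → ℕ → R}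
    (hfgh : ∀ i, (1 + ∑' j, f (i + 1) (j + 1) • X ^ ((i + 1) * (j + 1))) *
      (1 + ∑' j, g (i + 1) (j + 1) • X ^ ((i + 1) * (j + 1))) =
      1 + ∑' j, h (i + 1) (j + 1) • (X : R⟦X⟧) ^ ((i + 1) * (j + 1))) :
    genFun f * genFun g = genFun h := by
  rw [genFun_eq_tprod, genFun_eq_tprod, genFun_eq_tprod,
    ← (multipliable_genFun f).tprod_mul (multipliable_genFun g)]
  exact tprod_congr hfgh

theorem tsum_ite_eq_one_smul_X_pow (P : Prop) [Decidable P] (k : ℕ) :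
    ∑' j, (if P ∧ j + 1 = 1 then (1 : R) else 0) • (X : R⟦X⟧) ^ (k * (j + 1)) =
      if P then X ^ k else 0 := by
  rw [tsum_eq_single 0 (fun j hj => by simp [hj])]
  split_ifs <;> simp_all

end Topology

section Ring

variable {R : Type*} [CommRing R] [TopologicalSpace R] [IsTopologicalRing R] [T2Space R]

theorem one_add_tsum_neg_one_pow_smul_mul (k : ℕ) :
    (1 + ∑' j, (-1 : R) ^ (j + 1) • (X : R⟦X⟧) ^ ((k + 1) * (j + 1))) * (1 + X ^ (k + 1)) = 1 := by
  have hsum := summable_pow_of_constantCoeff_eq_zero (f := -(X : R⟦X⟧) ^ (k + 1)) (by simp)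
  have hgeom := hsum.tsum_pow_mul_one_sub
  rw [hsum.tsum_eq_zero_add, sub_neg_eq_add, pow_zero] at hgeom
  convert hgeom using 4 with j
  · rfl
  · funext j
    rw [pow_mul, neg_pow (X ^ (k + 1)), smul_eq_C_mul, map_pow, map_neg, map_one]

theorem genFun_neg_one_pow_even :
    genFun (fun i c => if Even i then (-1 : R) ^ c else 1) =
      genFun fun i c => if ¬Even i ∧ c = 1 then 1 else 0 := by
  set evenOnce : ℕ → ℕ → R := fun i c => if Even i ∧ c = 1 then 1 else 0
  have hsign : genFun (fun i c => if Even i then (-1 : R) ^ c else 1) * genFun evenOnce =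
      genFun fun i _ => if ¬Even i then 1 else 0 := by
    refine genFun_mul_genFun fun i => ?_
    simp only [evenOnce, tsum_ite_eq_one_smul_X_pow]
    by_cases hi : Even (i + 1)
    · simp [hi, one_add_tsum_neg_one_pow_smul_mul]
    · simp [hi]
  have hodd : genFun (fun i c => if ¬Even i ∧ c = 1 then (1 : R) else 0) * genFun evenOnce =
      genFun fun i c => if True ∧ c = 1 then 1 else 0 := by
    refine genFun_mul_genFun fun i => ?_
    simp only [evenOnce, tsum_ite_eq_one_smul_X_pow]
    by_cases hi : Even (i + 1) <;> simp [hi]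
  have heuler : genFun (fun i _ => if ¬Even i then (1 : R) else 0) =
      genFun fun i c => if True ∧ c = 1 then 1 else 0 := by
    ext n
    rw [coeff_genFun_ite_not_even, coeff_genFun_ite_count_eq_one, card_odds_eq_card_distincts]
    simp [distincts]
  have hunit : IsUnit (genFun evenOnce) := by
    rw [isUnit_iff_constantCoeff, constantCoeff_genFun]
    exact isUnit_one
  exact hunit.mul_left_injective (hsign.trans (heuler.trans hodd.symm))

end Ring

theorem sum_neg_one_pow_card_filter_even (n : ℕ) :
    ∑ p : n.Partition, (-1 : ℤ) ^ Multiset.card (p.parts.filter Even) =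
      #{p : n.Partition | p.parts.Nodup ∧ ∀ i ∈ p.parts, ¬Even i} := by
  rw [← coeff_genFun_neg_one_pow_even, genFun_neg_one_pow_even, coeff_genFun_ite_count_eq_one]

end Nat.Partition

theorem Finset.sum_neg_one_pow_eq_card_sub_card {ι : Type*} (s : Finset ι) (f : ι → ℕ) :
    ∑ i ∈ s, (-1 : ℤ) ^ f i = #{i ∈ s | Even (f i)} - #{i ∈ s | ¬Even (f i)} := by
  simp [neg_one_pow_eq_ite, sum_ite, sub_eq_add_neg]

/-- **Self-conjugate partitions versus even parts** (Aguiar–Lauve, identity (5.2)):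
for every `m`, the number `c(m)` of self-conjugate partitions of `m` equals `e(m) - o(m)`,
where `e(m)` (resp. `o(m)`) is the number of partitions of `m` with an even (resp. odd)
number of even parts; that is, `c(m) + o(m) = e(m)`. -/
theorem selfConjugate_add_oddEven_eq_evenEven (m : ℕ) :
    Nat.card {p : Nat.Partition m // p.SelfConjugate} +
      Nat.card {p : Nat.Partition m // Odd (Multiset.card (p.parts.filter fun a => Even a))} =
    Nat.card {p : Nat.Partition m // Even (Multiset.card (p.parts.filter fun a => Even a))} := by
  have hsc : Nat.card {p : m.Partition // p.SelfConjugate} =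
      #{p : m.Partition | p.parts.Nodup ∧ ∀ i ∈ p.parts, ¬Even i} := by
    rw [Nat.card_congr Nat.Partition.selfConjugateEquivOddDistinct, Nat.card_eq_fintype_card,
      Fintype.card_subtype]
  have hsign : (#{p : m.Partition | Even (Multiset.card (p.parts.filter fun a => Even a))} : ℤ) -
      #{p : m.Partition | ¬Even (Multiset.card (p.parts.filter fun a => Even a))} =
      #{p : m.Partition | p.parts.Nodup ∧ ∀ i ∈ p.parts, ¬Even i} := by
    rw [← sum_neg_one_pow_eq_card_sub_card]
    exact Nat.Partition.sum_neg_one_pow_card_filter_even m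
  simp only [Nat.card_eq_fintype_card, Fintype.card_subtype, ← Nat.not_even_iff_odd] at hsc ⊢
  omega
end

section
/- For every natural number m, the number of palindromic compositions of m equals 2^{⌊m/2⌋}. -/
/-!
Cutting a composition of `m` at its partial sums identifies it with a set of interior cut points
in `{1, …, m - 1}`, and reversing the composition reflects this set through `i ↦ m - i`.
Palindromic compositions thus correspond to reflection-invariant sets of cut points, which are
determined freely by their trace on the lower half of `{1, …, m - 1}`, a set of
`⌈(m - 1) / 2⌉ = ⌊m / 2⌋` points.
-/

namespace Fin

def foldHalf {k : ℕ} (j : Fin k) : Fin ((k + 1) / 2) :=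
  ⟨min j j.rev, by simp only [val_rev]; omega⟩

theorem foldHalf_rev {k : ℕ} (j : Fin k) : j.rev.foldHalf = j.foldHalf := by
  simp [foldHalf, min_comm]

theorem foldHalf_castLE {k : ℕ} (i : Fin ((k + 1) / 2)) :
    (i.castLE (by omega) : Fin k).foldHalf = i := by
  ext
  simp only [foldHalf, val_castLE, val_rev]
  omega

theorem castLE_foldHalf_eq_or {k : ℕ} (j : Fin k) :
    j.foldHalf.castLE (by omega) = j ∨ j.foldHalf.castLE (by omega) = j.rev := by
  simp only [Fin.ext_iff, foldHalf, val_castLE, val_rev]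
  omega

def revInvariantFinsetEquiv (k : ℕ) :
    {s : Finset (Fin k) // s.map revPerm.toEmbedding = s} ≃ Finset (Fin ((k + 1) / 2)) where
  toFun s := Finset.univ.filter fun i => i.castLE (by omega) ∈ s.1
  invFun t := ⟨Finset.univ.filter fun j => j.foldHalf ∈ t, by
    ext j; simp [Finset.mem_map_equiv, foldHalf_rev]⟩
  left_inv := by
    rintro ⟨s, hs⟩
    ext j
    have hrev : j.rev ∈ s ↔ j ∈ s := by
      conv_rhs => rw [← hs]
      simp [Finset.mem_map_equiv]
    simp only [Finset.mem_filter, Finset.mem_univ, true_and]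
    rcases castLE_foldHalf_eq_or j with h | h <;> rw [h]
    exact hrev
  right_inv t := by ext i; simp [foldHalf_castLE]

theorem card_revInvariantFinset (k : ℕ) :
    Nat.card {s : Finset (Fin k) // s.map revPerm.toEmbedding = s} = 2 ^ ((k + 1) / 2) := by
  rw [Nat.card_congr (revInvariantFinsetEquiv k), Nat.card_eq_fintype_card,
    Fintype.card_finset, Fintype.card_fin]

end Fin

namespace Composition

variable {n : ℕ} (c : Composition n)

theorem sizeUpTo_reverse (i : ℕ) : c.reverse.sizeUpTo i = n - c.sizeUpTo (c.length - i) := by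
  have hsplit := c.blocks.sum_take_add_sum_drop (c.length - i)
  rw [c.blocks_sum] at hsplit
  simp only [sizeUpTo, reverse_blocks, List.take_reverse, List.sum_reverse, length] at hsplit ⊢
  omega

theorem mem_boundaries_iff {j : Fin (n + 1)} :
    j ∈ c.boundaries ↔ ∃ i ≤ c.length, c.sizeUpTo i = j := by
  simp [boundaries, boundary, Fin.ext_iff, Fin.exists_iff]

theorem rev_mem_boundaries_reverse {j : Fin (n + 1)} :
    j.rev ∈ c.reverse.boundaries ↔ j ∈ c.boundaries := by
  have hle := c.sizeUpTo_le
  simp only [mem_boundaries_iff, length, reverse_blocks, List.length_reverse,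
    sizeUpTo_reverse, Fin.val_rev]
  constructor
  · rintro ⟨i, hi, hj⟩
    exact ⟨c.blocks.length - i, by omega, by have := hle (c.blocks.length - i); omega⟩
  · rintro ⟨i, hi, hj⟩
    exact ⟨c.blocks.length - i, by omega, by rw [Nat.sub_sub_self hi]; omega⟩

end Composition

def compositionFinsetEquiv (n : ℕ) : Composition n ≃ Finset (Fin (n - 1)) :=
  (compositionEquiv n).trans (compositionAsSetEquiv n)

theorem mem_compositionFinsetEquiv {n : ℕ} (c : Composition n) (i : Fin (n - 1)) :
    i ∈ compositionFinsetEquiv n c ↔ (⟨1 + i, by omega⟩ : Fin (n + 1)) ∈ c.boundaries := by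
  change i ∈ compositionAsSetEquiv n c.toCompositionAsSet ↔ _
  simp only [compositionAsSetEquiv, Equiv.coe_fn_mk, Set.mem_toFinset, Set.mem_ofPred_eq]
  rfl

theorem compositionFinsetEquiv_reverse {n : ℕ} (c : Composition n) :
    compositionFinsetEquiv n c.reverse =
      (compositionFinsetEquiv n c).map Fin.revPerm.toEmbedding := by
  ext i
  have hcut : (⟨1 + i, by omega⟩ : Fin (n + 1)) = (⟨1 + i.rev, by omega⟩ : Fin (n + 1)).rev := by
    ext; simp only [Fin.val_rev]; omega
  rw [Finset.mem_map_equiv, Fin.revPerm_symm, Fin.revPerm_apply, mem_compositionFinsetEquiv,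
    mem_compositionFinsetEquiv, hcut, Composition.rev_mem_boundaries_reverse]

/-- **Number of palindromic compositions** (Aguiar–Lauve, Section 5.3):
for every `m`, the number of palindromic compositions of `m` equals `2^⌊m/2⌋`. -/
theorem card_palindromic_compositions (m : ℕ) :
    Nat.card {c : Composition m // c.blocks.reverse = c.blocks} = 2 ^ (m / 2) := by
  have e : {c : Composition m // c.blocks.reverse = c.blocks} ≃
      {s : Finset (Fin (m - 1)) // s.map Fin.revPerm.toEmbedding = s} :=
    (compositionFinsetEquiv m).subtypeEquiv fun c => by
      rw [← compositionFinsetEquiv_reverse, (compositionFinsetEquiv m).apply_eq_iff_eq,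
        Composition.ext_iff, Composition.reverse_blocks]
  rw [Nat.card_congr e, Fin.card_revInvariantFinset]
  congr 1
  omega
end

section
/- For all natural numbers m ≥ 1 and 1 ≤ k ≤ m, the number of palindromic compositions of m with exactly k parts equals: binomial(⌈m/2⌉ − 1, ⌈k/2⌉ − 1) if m is even, or if m and k are both odd; and 0 if m is odd and k is even. -/
/-!
Cutting a palindromic composition of `m` with `k` parts at the midpoint `m / 2` leaves on the
left a composition of `⌈m/2⌉` with `⌈k/2⌉` parts: the first `⌊k/2⌋` parts, followed, when `k` is
odd, by the middle part `x` shrunk to `⌈x/2⌉`. Mirroring inverts this, the middle part being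
restored as `2⌈x/2⌉ - (m mod 2)`; this is possible exactly when `m` even or `k` odd. If `m` is odd
and `k` even there is no middle part, so `m` would be twice the sum of a half. Compositions of
`n` with `j` parts are counted by `C(n - 1, j - 1)` through their sets of inner boundary points.
-/

open List

namespace List

variable {α M : Type*}

theorem eq_nil_or_eq_singleton_of_length_le_one {l : List α} (h : l.length ≤ 1) :
    l = [] ∨ ∃ a, l = [a] := by
  match l, h with
  | [], _ => exact .inl rfl
  | [a], _ => exact .inr ⟨a, rfl⟩

theorem reverse_eq_self_of_length_le_one {l : List α} (h : l.length ≤ 1) : l.reverse = l := by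
  rcases eq_nil_or_eq_singleton_of_length_le_one h with rfl | ⟨a, rfl⟩ <;> rfl

theorem eq_take_append_middle_append_reverse_take {b : List α} (hb : b.reverse = b) :
    b = b.take (b.length / 2) ++ (b.drop (b.length / 2)).take (b.length % 2) ++
      (b.take (b.length / 2)).reverse := by
  have hsuffix : b.drop (b.length / 2 + b.length % 2) = (b.take (b.length / 2)).reverse := by
    rw [reverse_take, hb]
    congr 1
    omega
  rw [append_assoc, ← hsuffix, ← drop_drop, take_append_drop, take_append_drop]

theorem sum_eq_of_reverse_eq [AddCommMonoid M] {b : List M} (hb : b.reverse = b) :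
    b.sum = (b.take (b.length / 2)).sum + ((b.drop (b.length / 2)).take (b.length % 2)).sum +
      (b.take (b.length / 2)).sum := by
  conv_lhs => rw [eq_take_append_middle_append_reverse_take hb]
  simp only [sum_append, sum_reverse]

theorem even_sum_of_reverse_eq [AddCommMonoid M] {b : List M} (hb : b.reverse = b)
    (hlen : Even b.length) : Even b.sum := by
  rw [sum_eq_of_reverse_eq hb, Nat.even_iff.1 hlen, take_zero, sum_nil, add_zero]
  exact ⟨_, rfl⟩

end List

theorem CompositionAsSet.card_compositionAsSetEquiv_add_one {n : ℕ} (hn : 0 < n)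
    (c : CompositionAsSet n) : (compositionAsSetEquiv n c).card + 1 = c.length := by
  have h0 : (0 : Fin (n + 1)) ≠ Fin.last n :=
    Fin.ext_iff.not.2 (by rw [Fin.val_zero, Fin.val_last]; omega)
  have hcard : (compositionAsSetEquiv n c).card =
      ((c.boundaries.erase 0).erase (Fin.last n)).card := by
    apply Finset.card_bij (fun i _ => ⟨1 + i, by omega⟩)
    · intro i hi
      simp only [compositionAsSetEquiv, Equiv.coe_fn_mk, Set.mem_toFinset, Set.mem_ofPred_eq] at hi
      simp only [Finset.mem_erase, ne_eq, Fin.ext_iff, Fin.val_zero, Fin.val_last]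
      exact ⟨by omega, by omega, hi⟩
    · intro i _ j _ h
      simpa [Fin.ext_iff] using h
    · intro x hx
      simp only [Finset.mem_erase, ne_eq, Fin.ext_iff, Fin.val_last, Fin.val_zero] at hx
      refine ⟨⟨x - 1, by omega⟩, ?_, ?_⟩
      · simp only [compositionAsSetEquiv, Equiv.coe_fn_mk, Set.mem_toFinset, Set.mem_ofPred_eq]
        convert hx.2.2 using 2
        omega
      · ext
        simp only
        omega
  have herase_last := Finset.card_erase_add_one (Finset.mem_erase.2 ⟨h0.symm, c.getLast_mem⟩)
  have herase_zero := Finset.card_erase_add_one c.zero_mem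
  have := c.card_boundaries_eq_succ_length
  omega

theorem Composition.card_length_eq_choose {n k : ℕ} (hn : 0 < n) (hk : 0 < k) :
    Nat.card {c : Composition n // c.length = k} = (n - 1).choose (k - 1) := by
  let e : {c : Composition n // c.length = k} ≃ {s : Finset (Fin (n - 1)) // s.card = k - 1} :=
    ((compositionEquiv n).trans (compositionAsSetEquiv n)).subtypeEquiv fun c => by
      have := (compositionEquiv n c).card_compositionAsSetEquiv_add_one hn
      rw [show (compositionEquiv n c).length = c.length from c.toCompositionAsSet_length] at this
      simp only [Equiv.trans_apply]
      omega
  rw [Nat.card_congr e, Nat.card_eq_fintype_card, Fintype.card_finset_len, Fintype.card_fin]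

def foldBlocks (b : List ℕ) : List ℕ :=
  b.take (b.length / 2) ++ ((b.drop (b.length / 2)).take (b.length % 2)).map fun x => (x + 1) / 2

def unfoldBlocks (m k : ℕ) (l : List ℕ) : List ℕ :=
  l.take (k / 2) ++ (l.drop (k / 2)).map (fun y => 2 * y - m % 2) ++ (l.take (k / 2)).reverse

variable {m k : ℕ} {b l : List ℕ}

theorem length_foldBlocks (b : List ℕ) : (foldBlocks b).length = (b.length + 1) / 2 := by
  simp only [foldBlocks, length_append, length_map, length_take, length_drop]
  omega

theorem pos_of_mem_foldBlocks (hb : ∀ {x}, x ∈ b → 0 < x) {x : ℕ} (hx : x ∈ foldBlocks b) :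
    0 < x := by
  rcases mem_append.1 hx with hx | hx
  · exact hb (mem_of_mem_take hx)
  · obtain ⟨y, hy, rfl⟩ := mem_map.1 hx
    have := hb (mem_of_mem_drop (mem_of_mem_take hy))
    omega

theorem sum_foldBlocks (hb : b.reverse = b) : (foldBlocks b).sum = (b.sum + 1) / 2 := by
  obtain hmid | ⟨x, hmid⟩ := eq_nil_or_eq_singleton_of_length_le_one
    (l := (b.drop (b.length / 2)).take (b.length % 2)) (by rw [length_take]; omega)
  all_goals
    rw [sum_eq_of_reverse_eq hb, foldBlocks, sum_append, hmid]
    simp only [map_nil, map_cons, sum_nil, sum_cons]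
    omega

theorem unfoldBlocks_foldBlocks (hb : b.reverse = b) :
    unfoldBlocks b.sum b.length (foldBlocks b) = b := by
  have htake : (b.take (b.length / 2)).length = b.length / 2 := by rw [length_take]; omega
  rw [unfoldBlocks, foldBlocks, take_left' htake, drop_left' htake, map_map]
  conv_rhs => rw [eq_take_append_middle_append_reverse_take hb]
  congr 2
  obtain hmid | ⟨x, hmid⟩ := eq_nil_or_eq_singleton_of_length_le_one
    (l := (b.drop (b.length / 2)).take (b.length % 2)) (by rw [length_take]; omega)
  · rw [hmid, map_nil]
  · have hsum := sum_eq_of_reverse_eq hb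
    rw [hmid] at hsum ⊢
    simp only [map_cons, map_nil, sum_cons, sum_nil, Function.comp_apply] at hsum ⊢
    congr 1
    omega

theorem length_unfoldBlocks (hl : l.length = (k + 1) / 2) : (unfoldBlocks m k l).length = k := by
  simp only [unfoldBlocks, length_append, length_map, length_take, length_drop, length_reverse]
  omega

theorem pos_of_mem_unfoldBlocks (hl : ∀ {y}, y ∈ l → 0 < y) {x : ℕ}
    (hx : x ∈ unfoldBlocks m k l) : 0 < x := by
  rcases mem_append.1 hx with hx | hx
  · rcases mem_append.1 hx with hx | hx
    · exact hl (mem_of_mem_take hx)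
    · obtain ⟨y, hy, rfl⟩ := mem_map.1 hx
      have := hl (mem_of_mem_drop hy)
      omega
  · exact hl (mem_of_mem_take (mem_reverse.1 hx))

theorem reverse_unfoldBlocks (hl : l.length = (k + 1) / 2) :
    (unfoldBlocks m k l).reverse = unfoldBlocks m k l := by
  rw [unfoldBlocks, List.reverse_append, List.reverse_append, reverse_reverse, append_assoc,
    reverse_eq_self_of_length_le_one (by rw [length_map, length_drop]; omega)]

theorem foldBlocks_unfoldBlocks (hl : l.length = (k + 1) / 2) :
    foldBlocks (unfoldBlocks m k l) = l := by
  have htake : (l.take (k / 2)).length = k / 2 := by rw [length_take]; omega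
  have hmid : ((l.drop (k / 2)).map fun y => 2 * y - m % 2).length = k % 2 := by
    rw [length_map, length_drop]; omega
  rw [foldBlocks, length_unfoldBlocks hl, unfoldBlocks, append_assoc, take_left' htake,
    drop_left' htake, take_left' hmid, map_map]
  conv_rhs => rw [← take_append_drop (k / 2) l]
  congr 1
  conv_rhs => rw [← map_id (l.drop (k / 2))]
  congr 1
  funext y
  simp only [Function.comp_apply, id_eq]
  omega

theorem sum_unfoldBlocks (hl : l.length = (k + 1) / 2) (hpos : ∀ {y}, y ∈ l → 0 < y)
    (hpar : Even m ∨ Odd k) (hsum : l.sum = (m + 1) / 2) : (unfoldBlocks m k l).sum = m := by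
  have hpar' : m % 2 = 0 ∨ k % 2 = 1 := hpar.imp Nat.even_iff.1 Nat.odd_iff.1
  have hsplit := congrArg sum (take_append_drop (k / 2) l)
  obtain hmid | ⟨y, hmid⟩ := eq_nil_or_eq_singleton_of_length_le_one (l := l.drop (k / 2))
    (by rw [length_drop]; omega)
  · have hk := congrArg length hmid
    rw [length_drop, length_nil] at hk
    rw [unfoldBlocks, hmid]
    rw [hmid, sum_append] at hsplit
    simp only [sum_append, sum_reverse, map_nil, sum_nil] at hsplit ⊢
    omega
  · have hy := hpos (mem_of_mem_drop (hmid ▸ mem_singleton_self y))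
    rw [unfoldBlocks, hmid]
    rw [hmid, sum_append] at hsplit
    simp only [sum_append, sum_reverse, map_cons, map_nil, sum_cons, sum_nil] at hsplit ⊢
    omega

theorem Composition.even_of_reverse_blocks_eq {n : ℕ} (c : Composition n)
    (hc : c.blocks.reverse = c.blocks) (hlen : Even c.length) : Even n := by
  rw [← c.blocks_sum]
  exact even_sum_of_reverse_eq hc (c.blocks_length ▸ hlen)

def palindromicCompositionEquiv (hpar : Even m ∨ Odd k) :
    {c : Composition m // c.blocks.reverse = c.blocks ∧ c.length = k} ≃
      {c : Composition ((m + 1) / 2) // c.length = (k + 1) / 2} where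
  toFun c := ⟨⟨foldBlocks c.1.blocks, pos_of_mem_foldBlocks c.1.blocks_pos,
      by rw [sum_foldBlocks c.2.1, c.1.blocks_sum]⟩,
    by rw [← Composition.blocks_length, length_foldBlocks, Composition.blocks_length, c.2.2]⟩
  invFun c :=
    have hl : c.1.blocks.length = (k + 1) / 2 := by rw [Composition.blocks_length, c.2]
    ⟨⟨unfoldBlocks m k c.1.blocks, pos_of_mem_unfoldBlocks c.1.blocks_pos,
      sum_unfoldBlocks hl c.1.blocks_pos hpar c.1.blocks_sum⟩,
    reverse_unfoldBlocks hl, by rw [← Composition.blocks_length]; exact length_unfoldBlocks hl⟩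
  left_inv := by
    rintro ⟨c, hrev, rfl⟩
    have := unfoldBlocks_foldBlocks hrev
    rw [c.blocks_sum, c.blocks_length] at this
    exact Subtype.ext (Composition.ext this)
  right_inv c :=
    Subtype.ext (Composition.ext (foldBlocks_unfoldBlocks (by rw [Composition.blocks_length, c.2])))

theorem card_palindromic_compositions_length_general (m k : ℕ) (hm : 1 ≤ m) (hk : 1 ≤ k) :
    ((Even m ∨ (Odd m ∧ Odd k)) →
      Nat.card {c : Composition m // c.blocks.reverse = c.blocks ∧ c.length = k} =
        Nat.choose ((m + 1) / 2 - 1) ((k + 1) / 2 - 1)) ∧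
    ((Odd m ∧ Even k) →
      Nat.card {c : Composition m // c.blocks.reverse = c.blocks ∧ c.length = k} = 0) := by
  refine ⟨fun hpar => ?_, fun ⟨hm_odd, hk_even⟩ => ?_⟩
  · rw [Nat.card_congr (palindromicCompositionEquiv (hpar.imp_right And.right))]
    exact Composition.card_length_eq_choose (by omega) (by omega)
  · rw [Nat.card_eq_zero]
    exact .inl ⟨fun c => Nat.not_even_iff_odd.2 hm_odd
      (c.1.even_of_reverse_blocks_eq c.2.1 (c.2.2.symm ▸ hk_even))⟩

/-- **Palindromic compositions by length** (Aguiar–Lauve, Section 5.3): for `1 ≤ k ≤ m`,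
the number of palindromic compositions of `m` with exactly `k` parts equals
`C(⌈m/2⌉ - 1, ⌈k/2⌉ - 1)` if `m` is even, or if `m` and `k` are both odd, and equals `0`
if `m` is odd and `k` is even. -/
theorem card_palindromic_compositions_length (m k : ℕ) (hm : 1 ≤ m) (hk : 1 ≤ k)
    (hkm : k ≤ m) :
    ((Even m ∨ (Odd m ∧ Odd k)) →
      Nat.card {c : Composition m // c.blocks.reverse = c.blocks ∧ c.length = k} =
        Nat.choose ((m + 1) / 2 - 1) ((k + 1) / 2 - 1)) ∧
    ((Odd m ∧ Even k) →
      Nat.card {c : Composition m // c.blocks.reverse = c.blocks ∧ c.length = k} = 0) :=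
  card_palindromic_compositions_length_general m k hm hk
end

section
/- For every natural number m ≥ 1, the number of compositions of m all of whose parts are odd equals the m-th Fibonacci number fib(m) (with the convention fib(0) = 0, fib(1) = fib(2) = 1). -/
/-!
An odd composition of `m + 3` either starts with the part `1`, which can be removed, leaving an
odd composition of `m + 2`; or its first part is at least `3`, and lowering it by `2` leaves an
odd composition of `m + 1`. Hence the counts satisfy the Fibonacci recurrence, and the only odd
compositions of `1` and `2` are `1` and `1 + 1`.
-/

/-- Odd compositions of `m`, represented by their lists of parts. -/
def OddParts (m : ℕ) : Type := {l : List ℕ // (∀ a ∈ l, Odd a) ∧ l.sum = m}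

namespace OddParts

def compositionEquiv (m : ℕ) : {c : Composition m // ∀ a ∈ c.blocks, Odd a} ≃ OddParts m where
  toFun c := ⟨c.1.blocks, c.2, c.1.blocks_sum⟩
  invFun l := ⟨⟨l.1, fun ha => (l.2.1 _ ha).pos, l.2.2⟩, l.2.1⟩
  left_inv _ := rfl
  right_inv _ := rfl

instance (m : ℕ) : Finite (OddParts m) := .of_equiv _ (compositionEquiv m)

theorem eq_replicate_one {l : List ℕ} (hodd : ∀ a ∈ l, Odd a) (hsum : l.sum < 3) :
    l = List.replicate l.sum 1 := by
  have hone : ∀ a ∈ l, a = 1 := fun a ha => by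
    have := List.le_sum_of_mem ha
    obtain ⟨k, rfl⟩ := hodd a ha
    omega
  have hrep : l = List.replicate l.length 1 := List.eq_replicate_iff.2 ⟨rfl, hone⟩
  rw [hrep]
  simp

theorem card_eq_one_of_lt_three {m : ℕ} (hm : m < 3) : Nat.card (OddParts m) = 1 := by
  have : Unique (OddParts m) :=
    { default := ⟨List.replicate m 1, by simp, by simp⟩
      uniq := fun ⟨l, hodd, hsum⟩ => by
        subst hsum
        exact Subtype.ext (eq_replicate_one hodd hm) }
  exact Nat.card_unique

def consOne {m : ℕ} (l : OddParts m) : OddParts (m + 1) :=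
  ⟨1 :: l.1, by simpa using l.2.1, by simp [l.2.2, add_comm]⟩

def addTwoToHead {m : ℕ} : OddParts (m + 1) → OddParts (m + 3)
  | ⟨[], h⟩ => absurd h.2 (by simp)
  | ⟨a :: t, h⟩ => ⟨(a + 2) :: t, by simpa [Nat.odd_add] using h.1, by simp at h ⊢; omega⟩

def splitHead {m : ℕ} : OddParts (m + 3) → OddParts (m + 2) ⊕ OddParts (m + 1)
  | ⟨[], h⟩ => absurd h.2 (by simp)
  | ⟨0 :: _, h⟩ => absurd (h.1 0 (by simp)) (by simp)
  | ⟨1 :: t, h⟩ => .inl ⟨t, fun a ha => h.1 a (by simp [ha]), by simp at h ⊢; omega⟩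
  | ⟨(a + 2) :: t, h⟩ => .inr ⟨a :: t, by simpa [Nat.odd_add] using h.1, by simp at h ⊢; omega⟩

def splitHeadEquiv (m : ℕ) : OddParts (m + 3) ≃ OddParts (m + 2) ⊕ OddParts (m + 1) where
  toFun := splitHead
  invFun := Sum.elim consOne addTwoToHead
  left_inv := by
    rintro ⟨_ | ⟨_ | _ | a, t⟩, h⟩
    all_goals first | rfl | simp at h
  right_inv := by
    rintro (⟨t, h⟩ | ⟨_ | ⟨a, t⟩, h⟩)
    all_goals first | rfl | simp at h

theorem card_eq_fib (n : ℕ) : Nat.card (OddParts (n + 1)) = Nat.fib (n + 1) := by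
  induction n using Nat.twoStepInduction with
  | zero => exact card_eq_one_of_lt_three (by norm_num)
  | one => exact card_eq_one_of_lt_three (by norm_num)
  | more n ih₁ ih₂ =>
    rw [Nat.card_congr (splitHeadEquiv n), Nat.card_sum, ih₁, ih₂, add_comm]
    exact (Nat.fib_add_two (n := n + 1)).symm

end OddParts

/-- **Compositions into odd parts are counted by Fibonacci numbers** (Aguiar–Lauve,
Section 5.4): for every `m ≥ 1`, the number of compositions of `m` all of whose parts are
odd equals `fib m`. -/
theorem card_odd_compositions (m : ℕ) (hm : 1 ≤ m) :
    Nat.card {c : Composition m // ∀ a ∈ c.blocks, Odd a} = Nat.fib m := by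
  obtain ⟨n, rfl⟩ := Nat.exists_eq_add_of_le' hm
  rw [Nat.card_congr (OddParts.compositionEquiv _), OddParts.card_eq_fib]
end

section
/- For every natural number m ≥ 1, the number of palindromic compositions of m all of whose parts are odd equals fib(m/2) if m is even, and equals fib((m+3)/2) if m is odd (with the convention fib(0) = 0, fib(1) = fib(2) = 1). -/
/-! A palindrome is `w ++ w.reverse` or `w ++ a :: w.reverse`, and when all parts are odd the
parity of `m` decides which. For `m = 2k` the half `w` is an arbitrary odd composition of `k`;
odd compositions of `n ≥ 1` are counted by `fib n`, since the first part is either `1` or can be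
lowered by `2`. For `m = 2t + 1` the half `w` is an odd composition of some `j ≤ t` and the middle
part `m - 2j` is forced, which gives `1 + fib 1 + ⋯ + fib t = fib (t + 2)` palindromes. -/

open List Set

namespace List

variable {α : Type*}

theorem Palindrome.eq_append_reverse_or_eq_append_cons_reverse {l : List α} (h : Palindrome l) :
    (∃ w, l = w ++ w.reverse) ∨ ∃ w a, l = w ++ a :: w.reverse := by
  induction h with
  | nil => exact .inl ⟨[], rfl⟩
  | singleton a => exact .inr ⟨[], a, rfl⟩
  | cons_concat x _ ih =>
    rcases ih with ⟨w, rfl⟩ | ⟨w, a, rfl⟩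
    · exact .inl ⟨x :: w, by simp⟩
    · exact .inr ⟨x :: w, a, by simp⟩

theorem append_reverse_injective : Function.Injective fun w : List α => w ++ w.reverse := by
  intro v w h
  have hlen := congrArg length h
  simp only [length_append, length_reverse] at hlen
  exact (append_inj h (by omega)).1

theorem append_cons_reverse_injective (f : List α → α) :
    Function.Injective fun w : List α => w ++ f w :: w.reverse := by
  intro v w h
  have hlen := congrArg length h
  simp only [length_append, length_cons, length_reverse] at hlen
  exact (append_inj h (by omega)).1

theorem modifyHead_injective {f : α → α} (hf : f.Injective) : (modifyHead f).Injective := by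
  rintro (_ | ⟨a, v⟩) (_ | ⟨b, w⟩) h <;> simp_all [hf.eq_iff]

end List

def oddLists (n : ℕ) : Set (List ℕ) := {l | l.sum = n ∧ ∀ a ∈ l, Odd a}

def oddListsLE (t : ℕ) : Set (List ℕ) := {l | l.sum ≤ t ∧ ∀ a ∈ l, Odd a}

theorem oddLists_finite (n : ℕ) : (oddLists n).Finite :=
  (Set.finite_range (Composition.blocks (n := n))).subset fun l hl =>
    ⟨⟨l, fun ha => (hl.2 _ ha).pos, hl.1⟩, rfl⟩

theorem nil_mem_oddLists_iff {n : ℕ} : [] ∈ oddLists n ↔ n = 0 := by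
  simp [oddLists, eq_comm]

theorem cons_mem_oddLists_iff {a n : ℕ} {r : List ℕ} :
    a :: r ∈ oddLists n ↔ Odd a ∧ a ≤ n ∧ r ∈ oddLists (n - a) := by
  simp only [oddLists, mem_ofPred_eq, sum_cons, forall_mem_cons]
  constructor
  · rintro ⟨hs, ha, hr⟩
    exact ⟨ha, by omega, by omega, hr⟩
  · rintro ⟨ha, han, hs, hr⟩
    exact ⟨by omega, ha, hr⟩

theorem oddLists_zero : oddLists 0 = {[]} := by
  ext (_ | ⟨a, r⟩)
  · simp [nil_mem_oddLists_iff]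
  · simp only [cons_mem_oddLists_iff, mem_singleton_iff, reduceCtorEq, iff_false]
    rintro ⟨ha, ha0, -⟩
    exact Nat.not_odd_zero (Nat.le_zero.1 ha0 ▸ ha)

theorem oddLists_one : oddLists 1 = {[1]} := by
  ext (_ | ⟨a, r⟩)
  · simp [nil_mem_oddLists_iff]
  · simp only [cons_mem_oddLists_iff, mem_singleton_iff, cons.injEq]
    constructor
    · rintro ⟨ha, ha1, hr⟩
      have : a = 1 := by have := ha.pos; omega
      subst this
      simpa [oddLists_zero] using hr
    · rintro ⟨rfl, rfl⟩
      simp [oddLists_zero]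

theorem oddLists_two : oddLists 2 = {[1, 1]} := by
  ext (_ | ⟨a, r⟩)
  · simp [nil_mem_oddLists_iff]
  · simp only [cons_mem_oddLists_iff, mem_singleton_iff, cons.injEq]
    constructor
    · rintro ⟨ha, ha2, hr⟩
      have : a = 1 := by obtain ⟨j, rfl⟩ := ha; omega
      subst this
      simpa [oddLists_one] using hr
    · rintro ⟨rfl, rfl⟩
      simp [oddLists_one]

theorem oddLists_add_two {n : ℕ} (hn : n ≠ 0) :
    oddLists (n + 2) = cons 1 '' oddLists (n + 1) ∪ modifyHead (· + 2) '' oddLists n := by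
  ext (_ | ⟨a, r⟩)
  · simp [nil_mem_oddLists_iff, modifyHead_eq_nil_iff, hn]
  simp only [mem_union, mem_image, cons_mem_oddLists_iff]
  constructor
  · rintro ⟨ha, han, hr⟩
    obtain rfl | ha3 : a = 1 ∨ 3 ≤ a := by obtain ⟨j, rfl⟩ := ha; omega
    · exact .inl ⟨r, hr, rfl⟩
    · refine .inr ⟨(a - 2) :: r, cons_mem_oddLists_iff.2 ⟨?_, by omega, ?_⟩, ?_⟩
      · obtain ⟨j, rfl⟩ := ha
        exact ⟨j - 1, by omega⟩
      · rwa [show n - (a - 2) = n + 2 - a by omega]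
      · simp only [modifyHead_cons, cons.injEq, and_true]
        omega
  · rintro (⟨x, hx, hxe⟩ | ⟨_ | ⟨b, x⟩, hx, hxe⟩)
    · obtain ⟨rfl, rfl⟩ := cons_eq_cons.1 hxe
      exact ⟨odd_one, by omega, hx⟩
    · exact absurd (nil_mem_oddLists_iff.1 hx) hn
    · obtain ⟨rfl, rfl⟩ := cons_eq_cons.1 hxe
      dsimp only
      obtain ⟨hb, hbn, hx⟩ := cons_mem_oddLists_iff.1 hx
      exact ⟨hb.add_even even_two, by omega, by rwa [show n + 2 - (b + 2) = n - b by omega]⟩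

theorem ncard_oddLists {n : ℕ} (hn : n ≠ 0) : (oddLists n).ncard = Nat.fib n := by
  obtain ⟨n, rfl⟩ := Nat.exists_eq_add_one_of_ne_zero hn
  suffices (oddLists (n + 1)).ncard = Nat.fib (n + 1) ∧
      (oddLists (n + 2)).ncard = Nat.fib (n + 2) from this.1
  clear hn
  induction n with
  | zero => simp [oddLists_one, oddLists_two]
  | succ n ih =>
    refine ⟨ih.2, ?_⟩
    have hdisj :
        Disjoint (cons 1 '' oddLists (n + 2)) (modifyHead (· + 2) '' oddLists (n + 1)) := by
      rw [Set.disjoint_left]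
      rintro _ ⟨x, -, rfl⟩ ⟨_ | ⟨b, y⟩, -, hy⟩ <;> simp at hy
    rw [oddLists_add_two n.succ_ne_zero, ncard_union_eq hdisj ((oddLists_finite _).image _)
      ((oddLists_finite _).image _), ncard_image_of_injective _ cons_injective,
      ncard_image_of_injective _ (modifyHead_injective (add_left_injective 2)), ih.1, ih.2,
      Nat.fib_add_two (n := n + 1), add_comm]

theorem oddListsLE_zero : oddListsLE 0 = oddLists 0 := by
  simp only [oddListsLE, oddLists, Nat.le_zero]

theorem oddListsLE_succ (t : ℕ) : oddListsLE (t + 1) = oddListsLE t ∪ oddLists (t + 1) := by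
  ext l
  simp only [oddListsLE, oddLists, mem_union, mem_ofPred_eq, Nat.le_succ_iff_eq_or_le]
  tauto

theorem oddListsLE_finite (t : ℕ) : (oddListsLE t).Finite := by
  induction t with
  | zero => exact oddListsLE_zero ▸ oddLists_finite 0
  | succ t ih => exact oddListsLE_succ t ▸ ih.union (oddLists_finite _)

theorem ncard_oddListsLE (t : ℕ) : (oddListsLE t).ncard = Nat.fib (t + 2) := by
  induction t with
  | zero => simp [oddListsLE_zero, oddLists_zero]
  | succ t ih =>
    have hdisj : Disjoint (oddListsLE t) (oddLists (t + 1)) :=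
      Set.disjoint_left.2 fun l hle heq => by have := hle.1; have := heq.1; omega
    rw [oddListsLE_succ, ncard_union_eq hdisj (oddListsLE_finite t) (oddLists_finite _), ih,
      ncard_oddLists t.succ_ne_zero, Nat.fib_add_two (n := t + 1), add_comm]

theorem sum_append_cons_reverse (w : List ℕ) (a : ℕ) :
    (w ++ a :: w.reverse).sum = 2 * w.sum + a := by
  simp only [sum_append, sum_cons, sum_reverse]; ring

theorem palindromes_oddLists_two_mul (k : ℕ) :
    {l ∈ oddLists (2 * k) | l.reverse = l} = (fun w => w ++ w.reverse) '' oddLists k := by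
  ext l
  constructor
  · rintro ⟨⟨hs, ho⟩, hl⟩
    rcases (Palindrome.of_reverse_eq hl).eq_append_reverse_or_eq_append_cons_reverse with
      ⟨w, rfl⟩ | ⟨w, a, rfl⟩
    · refine ⟨w, ⟨?_, fun a ha => ho a (mem_append_left _ ha)⟩, rfl⟩
      simp only [sum_append, sum_reverse] at hs; omega
    · obtain ⟨j, rfl⟩ := ho a (by simp)
      rw [sum_append_cons_reverse] at hs
      omega
  · rintro ⟨w, ⟨hs, ho⟩, rfl⟩
    refine ⟨⟨by simp only [sum_append, hs, sum_reverse]; ring, ?_⟩, by simp⟩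
    simp only [mem_append, mem_reverse]
    rintro a (ha | ha) <;> exact ho a ha

theorem palindromes_oddLists_two_mul_add_one (t : ℕ) :
    {l ∈ oddLists (2 * t + 1) | l.reverse = l} =
      (fun w => w ++ (2 * t + 1 - 2 * w.sum) :: w.reverse) '' oddListsLE t := by
  ext l
  constructor
  · rintro ⟨⟨hs, ho⟩, hl⟩
    rcases (Palindrome.of_reverse_eq hl).eq_append_reverse_or_eq_append_cons_reverse with
      ⟨w, rfl⟩ | ⟨w, a, rfl⟩
    · simp only [sum_append, sum_reverse] at hs; omega
    · rw [sum_append_cons_reverse] at hs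
      refine ⟨w, ⟨by omega, fun a ha => ho a (mem_append_left _ ha)⟩, ?_⟩
      dsimp only; congr 2; omega
  · rintro ⟨w, ⟨hs, ho⟩, rfl⟩
    refine ⟨⟨by rw [sum_append_cons_reverse]; omega, ?_⟩, by simp⟩
    simp only [mem_append, mem_cons, mem_reverse]
    rintro a (ha | rfl | ha)
    · exact ho a ha
    · exact ⟨t - w.sum, by omega⟩
    · exact ho a ha

theorem card_palindromic_odd_compositions_eq_ncard (m : ℕ) :
    Nat.card {c : Composition m // c.blocks.reverse = c.blocks ∧ ∀ a ∈ c.blocks, Odd a} =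
      {l ∈ oddLists m | l.reverse = l}.ncard := by
  rw [← Nat.card_coe_set_eq]
  exact Nat.card_congr
    { toFun c := ⟨c.1.blocks, ⟨c.1.blocks_sum, c.2.2⟩, c.2.1⟩
      invFun l := ⟨⟨l.1, fun ha => (l.2.1.2 _ ha).pos, l.2.1.1⟩, l.2.2, l.2.1.2⟩
      left_inv _ := rfl
      right_inv _ := rfl }

/-- **Palindromic odd compositions are counted by Fibonacci numbers** (Aguiar–Lauve,
Section 5.4): for every `m ≥ 1`, the number of palindromic compositions of `m` all of whose
parts are odd equals `fib (m/2)` for even `m` and `fib ((m+3)/2)` for odd `m`. -/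
theorem card_palindromic_odd_compositions (m : ℕ) (hm : 1 ≤ m) :
    (Even m →
      Nat.card {c : Composition m // c.blocks.reverse = c.blocks ∧ ∀ a ∈ c.blocks, Odd a} =
        Nat.fib (m / 2)) ∧
    (Odd m →
      Nat.card {c : Composition m // c.blocks.reverse = c.blocks ∧ ∀ a ∈ c.blocks, Odd a} =
        Nat.fib ((m + 3) / 2)) := by
  rw [card_palindromic_odd_compositions_eq_ncard]
  constructor
  · rintro ⟨k, rfl⟩
    rw [← two_mul, palindromes_oddLists_two_mul,
      ncard_image_of_injective _ append_reverse_injective, ncard_oddLists (by omega),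
      Nat.mul_div_cancel_left k two_pos]
  · rintro ⟨t, rfl⟩
    rw [palindromes_oddLists_two_mul_add_one,
      ncard_image_of_injective _ (append_cons_reverse_injective _), ncard_oddListsLE,
      show (2 * t + 1 + 3) / 2 = t + 2 by omega]
end

section
/- Define, for a composition α = (a_1, …, a_k) of m, the statistic inv(α) = ∑_{1 ≤ i < j ≤ k} a_i · a_j, and let P(k, m) ∈ ℤ[q] be the polynomial ∑_α q^{inv(α)}, the sum over all palindromic compositions α of m with exactly k parts. Then for all natural numbers k ≥ 1 and m ≥ 0, the following recursions hold in ℤ[q]: P(2k, m) = ∑_{a ≥ 1, 2a ≤ m} q^{a² + 2a(m − 2a)} · P(2k − 2, m − 2a), and P(2k + 1, m) = ∑_{a ≥ 1, 2a < m} q^{a² + 2a(m − 2a)} · P(2k − 1, m − 2a). -/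
/-!
A palindromic composition with at least two parts is `(a, β, a)` for a unique `a ≥ 1` and a
unique palindromic composition `β` of `m - 2a` with two parts fewer. Since
`inv(α) = ∑_i a_i (a_{i+1} + ⋯ + a_k)`, we get `inv(a, β, a) = a² + 2a(m - 2a) + inv(β)`, which
gives both recursions with the range `2a ≤ m`; for an odd number of parts the terms with `2a = m`
vanish, because a composition of `0` has no parts.
-/

/-- The inversion statistic of a composition `α = (a_1, …, a_k)`:
`inv(α) = ∑_{1 ≤ i < j ≤ k} a_i a_j`. -/
def compInv {m : ℕ} (c : Composition m) : ℕ :=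
  ∑ i ∈ Finset.range c.length, ∑ j ∈ Finset.Ioo i c.length,
    c.blocks.getD i 0 * c.blocks.getD j 0

/-- `P(k, m) = ∑_α q^{inv(α)} ∈ ℤ[q]`, the sum over all palindromic compositions `α` of `m`
with exactly `k` parts. -/
noncomputable def palPoly (k m : ℕ) : Polynomial ℤ :=
  ∑ c ∈ Finset.univ.filter
      (fun c : Composition m => c.blocks.reverse = c.blocks ∧ c.length = k),
    Polynomial.X ^ compInv c

open Finset Polynomial

theorem List.exists_eq_cons_append_singleton_of_reverse_eq {α : Type*} {L : List α}
    (hL : L.reverse = L) (hlen : 2 ≤ L.length) : ∃ a l, L = a :: (l ++ [a]) := by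
  cases List.Palindrome.of_reverse_eq hL with
  | nil | singleton => simp at hlen
  | cons_concat a => exact ⟨a, _, rfl⟩

theorem sum_range_getD_eq_sum (L : List ℕ) : ∑ j ∈ range L.length, L.getD j 0 = L.sum := by
  induction L with
  | nil => simp
  | cons x L ih =>
    simp only [List.length_cons, Finset.sum_range_succ', List.getD_cons_succ, ih,
      List.getD_cons_zero, List.sum_cons]
    ring

def listInv : List ℕ → ℕ
  | [] => 0
  | x :: l => x * l.sum + listInv l

theorem sum_range_sum_Ioo_getD_mul_eq_listInv (L : List ℕ) :
    ∑ i ∈ range L.length, ∑ j ∈ Ioo i L.length, L.getD i 0 * L.getD j 0 = listInv L := by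
  induction L with
  | nil => simp [listInv]
  | cons x L ih =>
    have Ioo_succ (i : ℕ) :
        Ioo (i + 1) (L.length + 1) = (Ioo i L.length).map (addRightEmbedding 1) := by
      rw [Finset.map_add_right_Ioo]
    have Ioo_zero : Ioo 0 (L.length + 1) = (range L.length).map (addRightEmbedding 1) := by
      rw [Finset.range_eq_Ico, Finset.map_add_right_Ico, Finset.Ico_add_one_left_eq_Ioo]
    simp only [List.length_cons, Finset.sum_range_succ', Ioo_succ, Ioo_zero, Finset.sum_map,
      addRightEmbedding_apply, List.getD_cons_succ, List.getD_cons_zero, ih]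
    rw [← Finset.mul_sum, sum_range_getD_eq_sum, listInv, add_comm]

theorem compInv_eq_listInv {m : ℕ} (c : Composition m) : compInv c = listInv c.blocks :=
  sum_range_sum_Ioo_getD_mul_eq_listInv c.blocks

theorem listInv_append_singleton (l : List ℕ) (a : ℕ) :
    listInv (l ++ [a]) = listInv l + a * l.sum := by
  induction l with
  | nil => simp [listInv]
  | cons x l ih => simp only [List.cons_append, listInv, ih, List.sum_append, List.sum_cons,
      List.sum_nil]; ring

theorem listInv_cons_append_singleton (a : ℕ) (l : List ℕ) :
    listInv (a :: (l ++ [a])) = a ^ 2 + 2 * a * l.sum + listInv l := by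
  simp only [listInv, listInv_append_singleton, List.sum_append, List.sum_cons, List.sum_nil]
  ring

namespace Composition

def wrap {m : ℕ} (a : ℕ) (ha : 0 < a) (h2a : 2 * a ≤ m) (c : Composition (m - 2 * a)) :
    Composition m where
  blocks := a :: (c.blocks ++ [a])
  blocks_pos := by
    simp only [List.mem_cons, List.mem_append, List.not_mem_nil, or_false]
    rintro i (rfl | hi | rfl)
    exacts [ha, c.blocks_pos hi, ha]
  blocks_sum := by
    simp only [List.sum_cons, List.sum_append, List.sum_nil, c.blocks_sum]
    omega

variable {m a : ℕ} {ha : 0 < a} {h2a : 2 * a ≤ m} {c : Composition (m - 2 * a)}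

@[simp]
theorem wrap_blocks : (wrap a ha h2a c).blocks = a :: (c.blocks ++ [a]) := rfl

@[simp]
theorem wrap_length : (wrap a ha h2a c).length = c.length + 2 := by
  simp [Composition.length]

theorem compInv_wrap : compInv (wrap a ha h2a c) = a ^ 2 + 2 * a * (m - 2 * a) + compInv c := by
  rw [compInv_eq_listInv, compInv_eq_listInv, wrap_blocks, listInv_cons_append_singleton,
    c.blocks_sum]

theorem exists_wrap_eq_of_reverse_eq {d : Composition m} (hd : d.blocks.reverse = d.blocks)
    (hlen : 2 ≤ d.length) :
    ∃ a, ∃ (ha : 0 < a) (h2a : 2 * a ≤ m) (c : Composition (m - 2 * a)), wrap a ha h2a c = d := by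
  obtain ⟨a, l, hal⟩ := List.exists_eq_cons_append_singleton_of_reverse_eq hd hlen
  have hpos : ∀ i ∈ a :: (l ++ [a]), 0 < i := hal ▸ fun i => d.blocks_pos
  have hsum : (a :: (l ++ [a])).sum = m := hal ▸ d.blocks_sum
  simp only [List.sum_cons, List.sum_append, List.sum_nil] at hsum
  refine ⟨a, hpos a (by simp), by omega, ⟨l, fun hi => hpos _ (by simp [hi]), by omega⟩, ?_⟩
  exact Composition.ext hal.symm

end Composition

theorem palPoly_eq_zero_of_lt {k m : ℕ} (h : m < k) : palPoly k m = 0 := by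
  refine Finset.sum_eq_zero fun c hc => absurd (Finset.mem_filter.1 hc).2.2 ?_
  exact (c.length_le.trans_lt h).ne

theorem palPoly_add_two (n m : ℕ) :
    palPoly (n + 2) m =
      ∑ a ∈ (Finset.Icc 1 m).filter (fun a => 2 * a ≤ m),
        X ^ (a ^ 2 + 2 * a * (m - 2 * a)) * palPoly n (m - 2 * a) := by
  simp only [palPoly, Finset.mul_sum, ← pow_add]
  rw [Finset.sum_sigma']
  symm
  refine Finset.sum_bij
    (fun p hp => Composition.wrap p.1 (by simp at hp; omega) (by simp at hp; omega) p.2)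
    ?_ ?_ ?_ ?_
  · rintro ⟨a, c⟩ hp
    simp only [Finset.mem_sigma, Finset.mem_filter, Finset.mem_univ, true_and] at hp ⊢
    simp [hp.2.1, hp.2.2]
  · rintro ⟨a, c⟩ _ ⟨a', c'⟩ _ h
    obtain ⟨rfl, hc, -⟩ : a = a' ∧ c.blocks = c'.blocks ∧ a = a' := by
      simpa using congrArg Composition.blocks h
    rw [Composition.ext hc]
  · intro d hd
    simp only [Finset.mem_filter, Finset.mem_univ, true_and] at hd
    obtain ⟨a, ha, h2a, c, rfl⟩ := Composition.exists_wrap_eq_of_reverse_eq hd.1 (by omega)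
    refine ⟨⟨a, c⟩, ?_, rfl⟩
    simp only [Composition.wrap_blocks, Composition.wrap_length] at hd
    simp_all [Nat.one_le_iff_ne_zero, ha.ne', (by omega : a ≤ m)]
  · rintro ⟨a, c⟩ -
    rw [Composition.compInv_wrap]

/-- **Recursions for the palindromic `q`-polynomials** (Aguiar–Lauve, Proposition on
`q`-generating functions): for `k ≥ 1` and any `m`, in `ℤ[q]`,
`P(2k, m) = ∑_{a ≥ 1, 2a ≤ m} q^{a² + 2a(m-2a)} P(2k-2, m-2a)` and
`P(2k+1, m) = ∑_{a ≥ 1, 2a < m} q^{a² + 2a(m-2a)} P(2k-1, m-2a)`. -/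
theorem palPoly_recursion (k m : ℕ) (hk : 1 ≤ k) :
    palPoly (2 * k) m =
      ∑ a ∈ (Finset.Icc 1 m).filter (fun a => 2 * a ≤ m),
        Polynomial.X ^ (a ^ 2 + 2 * a * (m - 2 * a)) * palPoly (2 * k - 2) (m - 2 * a) ∧
    palPoly (2 * k + 1) m =
      ∑ a ∈ (Finset.Icc 1 m).filter (fun a => 2 * a < m),
        Polynomial.X ^ (a ^ 2 + 2 * a * (m - 2 * a)) * palPoly (2 * k - 1) (m - 2 * a) := by
  refine ⟨by rw [← palPoly_add_two]; congr 1; omega, ?_⟩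
  rw [show 2 * k + 1 = 2 * k - 1 + 2 by omega, palPoly_add_two]
  refine (Finset.sum_subset (fun a ha => ?_) fun a ha hna => ?_).symm
  · simp only [Finset.mem_filter] at ha ⊢
    exact ⟨ha.1, ha.2.le⟩
  · simp only [Finset.mem_filter, Finset.mem_Icc, not_and, not_lt] at ha hna
    rw [palPoly_eq_zero_of_lt (by omega), mul_zero]
end
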